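/- arXiv:2403.05232 — 7 statements merged into one kernel-verified Lean document; each statement's English description precedes it below -/
import Mathlib

section
/- Let A be an abelian category and B a full subcategory closed under extensions and under kernels of epimorphisms. If (X, Y) is a complete cotorsion pair in A with X ⊆ B, then (X, Y ∩ B) is a complete cotorsion pair in the exact category B. -/
universe u

open CategoryTheory

/-- `Ext¹(X, Y) = 0` in an abelian category, expressed via the splitting of every
short exact sequence `0 → Y → E → X → 0`. -/
def Ext1Z {A : Type u} [Category.{u} A] [Abelian A] (X Y : A) : Prop :=
  ∀ (E : A) (i : Y ⟶ E) (p : E ⟶ X) (w : i ≫ p = 0),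
    (ShortComplex.mk i p w).ShortExact → ∃ s : X ⟶ E, s ≫ p = 𝟙 X

/-- A complete cotorsion pair `(X, Y)` in an abelian category. -/
def IsCompleteCotorsionPair {A : Type u} [Category.{u} A] [Abelian A]
    (X Y : Set A) : Prop :=
  (∀ M, M ∈ Y ↔ ∀ C ∈ X, Ext1Z C M) ∧
  (∀ M, M ∈ X ↔ ∀ F ∈ Y, Ext1Z M F) ∧
  (∀ M : A, ∃ (F C : A) (i : F ⟶ C) (p : C ⟶ M) (w : i ≫ p = 0),
      (ShortComplex.mk i p w).ShortExact ∧ F ∈ Y ∧ C ∈ X) ∧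
  (∀ M : A, ∃ (F C : A) (i : M ⟶ F) (p : F ⟶ C) (w : i ≫ p = 0),
      (ShortComplex.mk i p w).ShortExact ∧ F ∈ Y ∧ C ∈ X)

/-- A complete cotorsion pair `(X, Y)` in the exact category given by an
extension-closed full subcategory `B` of an abelian category, where the admissible
exact sequences of `B` are the short exact sequences of the ambient abelian category
with all three terms in `B`. -/
def IsCompleteCotorsionPairIn {A : Type u} [Category.{u} A] [Abelian A]
    (B X Y : Set A) : Prop :=
  X ⊆ B ∧ Y ⊆ B ∧
  (∀ M ∈ B, (M ∈ Y ↔ ∀ C ∈ X, Ext1Z C M)) ∧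
  (∀ M ∈ B, (M ∈ X ↔ ∀ F ∈ Y, Ext1Z M F)) ∧
  (∀ M ∈ B, ∃ (F C : A) (i : F ⟶ C) (p : C ⟶ M) (w : i ≫ p = 0),
      (ShortComplex.mk i p w).ShortExact ∧ F ∈ Y ∧ C ∈ X) ∧
  (∀ M ∈ B, ∃ (F C : A) (i : M ⟶ F) (p : F ⟶ C) (w : i ≫ p = 0),
      (ShortComplex.mk i p w).ShortExact ∧ F ∈ Y ∧ C ∈ X)

/-- A cotorsion pair `(X, Y)` (orthogonality only) in the exact category given by an
extension-closed full subcategory `B` of an abelian category. -/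
def IsCotorsionPairIn {A : Type u} [Category.{u} A] [Abelian A]
    (B X Y : Set A) : Prop :=
  X ⊆ B ∧ Y ⊆ B ∧
  (∀ M ∈ B, (M ∈ Y ↔ ∀ C ∈ X, Ext1Z C M)) ∧
  (∀ M ∈ B, (M ∈ X ↔ ∀ F ∈ Y, Ext1Z M F))

/-! The only non-formal point is the left class. If `M ∈ B` is left orthogonal to `Y ∩ B`,
its special `X`-precover `0 → F → C → M → 0` has `F ∈ Y ∩ B` by closure under kernels of
epimorphisms, so it splits and `M` is a retract of `C ∈ X`. The left class of a cotorsion pair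
is closed under retracts: pulling an extension of `M` back along the retraction gives an
extension of `C`, whose splitting yields one of the original. -/

section

open Limits

variable {A : Type u} [Category.{u} A] [Abelian A]

lemma exists_shortExact_pullback_snd {F E M C : A} (i : F ⟶ E) (q : E ⟶ M) (w : i ≫ q = 0)
    (hse : (ShortComplex.mk i q w).ShortExact) (p : C ⟶ M) :
    ∃ (j : F ⟶ pullback q p) (w' : j ≫ pullback.snd q p = 0),
      (ShortComplex.mk j (pullback.snd q p) w').ShortExact := by
  have := hse.mono_f
  have := hse.epi_g
  let j : F ⟶ pullback q p := pullback.lift i 0 (by simp [w])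
  have hj : j ≫ pullback.fst q p = i := pullback.lift_fst _ _ _
  have : Mono j := mono_of_mono_fac hj
  refine ⟨j, pullback.lift_snd _ _ _, .mk (ShortComplex.exact_of_f_is_kernel _
    (KernelFork.IsLimit.ofι' _ _ fun {T} k hk => ?_))⟩
  have hk' : (k ≫ pullback.fst q p) ≫ q = 0 := by
    rw [Category.assoc, pullback.condition, ← Category.assoc, hk, zero_comp]
  refine ⟨hse.exact.lift (k ≫ pullback.fst q p) hk', pullback.hom_ext ?_ ?_⟩
  · rw [Category.assoc, hj]
    exact hse.exact.lift_f _ _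
  · rw [Category.assoc, pullback.lift_snd, comp_zero]
    exact hk.symm

lemma Ext1Z.of_retract {M C F : A} {s : M ⟶ C} {p : C ⟶ M} (hsp : s ≫ p = 𝟙 M)
    (hC : Ext1Z C F) : Ext1Z M F := by
  intro E i q w hse
  obtain ⟨j, wj, hsej⟩ := exists_shortExact_pullback_snd i q w hse p
  obtain ⟨t, ht⟩ := hC _ j _ wj hsej
  refine ⟨s ≫ t ≫ pullback.fst q p, ?_⟩
  rw [Category.assoc, Category.assoc, pullback.condition, ← Category.assoc t, ht,
    Category.id_comp, hsp]

lemma IsCompleteCotorsionPair.mem_left_of_retract {X Y : Set A}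
    (h : IsCompleteCotorsionPair X Y) {M C : A} (hC : C ∈ X) {s : M ⟶ C} {p : C ⟶ M}
    (hsp : s ≫ p = 𝟙 M) : M ∈ X :=
  (h.2.1 M).2 fun F hF => ((h.2.1 C).1 hC F hF).of_retract hsp

end

/-- If `B` is a full subcategory of an abelian category closed under extensions and
kernels of epimorphisms, and `(X, Y)` is a complete cotorsion pair with `X ⊆ B`, then
`(X, Y ∩ B)` is a complete cotorsion pair in the exact category `B`. -/
theorem induced_complete_cotorsion_pair {A : Type u} [Category.{u} A] [Abelian A]
    (B X Y : Set A)
    (hext : ∀ S : ShortComplex A, S.ShortExact → S.X₁ ∈ B → S.X₃ ∈ B → S.X₂ ∈ B)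
    (hker : ∀ S : ShortComplex A, S.ShortExact → S.X₂ ∈ B → S.X₃ ∈ B → S.X₁ ∈ B)
    (hXY : IsCompleteCotorsionPair X Y) (hXB : X ⊆ B) :
    IsCompleteCotorsionPairIn B X (Y ∩ B) := by
  have ⟨hY, hX, hprecover, hpreenvelope⟩ := hXY
  refine ⟨hXB, fun _ hF => hF.2, fun M hM => ?_, fun M hM => ?_, fun M hM => ?_,
    fun M hM => ?_⟩
  · exact ⟨fun h C hC => (hY M).1 h.1 C hC, fun h => ⟨(hY M).2 h, hM⟩⟩
  · refine ⟨fun hMX F hF => (hX M).1 hMX F hF.1, fun h => ?_⟩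
    obtain ⟨F, C, i, p, w, hse, hFY, hCX⟩ := hprecover M
    obtain ⟨s, hs⟩ := h F ⟨hFY, hker _ hse (hXB hCX) hM⟩ C i p w hse
    exact hXY.mem_left_of_retract hCX hs
  · obtain ⟨F, C, i, p, w, hse, hFY, hCX⟩ := hprecover M
    exact ⟨F, C, i, p, w, hse, ⟨hFY, hker _ hse (hXB hCX) hM⟩, hCX⟩
  · obtain ⟨F, C, i, p, w, hse, hFY, hCX⟩ := hpreenvelope M
    exact ⟨F, C, i, p, w, hse, ⟨hFY, hext _ hse hM (hXB hCX)⟩, hCX⟩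
end

section
/- Let A be an abelian category and B a full subcategory closed under extensions and under kernels of epimorphisms. If (X, Y) is a complete hereditary cotorsion pair in A with X ⊆ B, then (X, Y ∩ B) is a hereditary cotorsion pair in the exact category B. -/
universe u

open CategoryTheory Limits

/-! Orthogonality inside `B` is orthogonality in the ambient category tested on objects of `B`,
so `Y ∩ B` is the right class at once. For the left class, let `M ∈ B` be orthogonal to `Y ∩ B`
and take a special `X`-precover `0 → F → C → M → 0`. Since `C ∈ X ⊆ B` and `B` is closed under
kernels of epimorphisms, `F ∈ Y ∩ B`, so the sequence splits and `M` is a retract of `C ∈ X`;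
retracts stay in `X` because `Ext¹(-, F)` vanishing passes to retracts (pull back along the
retraction). Heredity inside `B` is inherited from heredity in the ambient category. -/

lemma CategoryTheory.ShortComplex.ShortExact.pullbackAlong {C : Type*} [Category* C] [Abelian C]
    {S : ShortComplex C} (hS : S.ShortExact) {X : C} (p : X ⟶ S.X₃) :
    (ShortComplex.mk (pullback.lift S.f 0 (by simp)) (pullback.snd S.g p)
      (pullback.lift_snd _ _ _)).ShortExact := by
  have := hS.mono_f
  have := hS.epi_g
  have : Mono (pullback.lift S.f 0 (by simp) : S.X₁ ⟶ pullback S.g p) :=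
    mono_of_mono_fac (pullback.lift_fst _ _ _)
  have : Epi (pullback.snd S.g p) := Abelian.epi_pullback_of_epi_f S.g p
  refine ⟨ShortComplex.exact_iff_exact_up_to_refinements _ |>.2 fun T x₂ hx₂ => ?_⟩
  dsimp only at x₂ hx₂
  obtain ⟨T', π, hπ, x₁, hx₁⟩ := hS.exact.exact_up_to_refinements (x₂ ≫ pullback.fst S.g p)
    (by rw [Category.assoc, pullback.condition, reassoc_of% hx₂, zero_comp])
  refine ⟨T', π, hπ, x₁, pullback.hom_ext ?_ ?_⟩
  · rw [Category.assoc, Category.assoc, pullback.lift_fst, hx₁]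
  · rw [Category.assoc, Category.assoc, hx₂, pullback.lift_snd, comp_zero, comp_zero]

section

variable {A : Type u} [Category.{u} A] [Abelian A]

lemma Ext1Z.of_retract_s1 {M C F : A} (e : Retract M C) (h : Ext1Z C F) : Ext1Z M F := by
  intro E i q w hS
  obtain ⟨t, ht⟩ := h _ _ _ _ (hS.pullbackAlong e.r)
  refine ⟨e.i ≫ t ≫ pullback.fst q e.r, ?_⟩
  rw [Category.assoc, Category.assoc, pullback.condition, reassoc_of% ht, e.retract]

lemma Ext1Z.nonempty_retract {F C M : A} {i : F ⟶ C} {p : C ⟶ M} {w : i ≫ p = 0}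
    (hS : (ShortComplex.mk i p w).ShortExact) (h : Ext1Z M F) : Nonempty (Retract M C) :=
  let ⟨s, hs⟩ := h C i p w hS
  ⟨⟨s, p, hs⟩⟩

namespace IsCompleteCotorsionPair

variable {B X Y : Set A}

lemma mem_left_of_retract_s1 (hXY : IsCompleteCotorsionPair X Y) {M C : A} (e : Retract M C)
    (hC : C ∈ X) : M ∈ X :=
  (hXY.2.1 M).2 fun F hF => ((hXY.2.1 C).1 hC F hF).of_retract_s1 e

lemma mem_left_of_forall_ext1Z_inter (hXY : IsCompleteCotorsionPair X Y) (hXB : X ⊆ B)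
    (hker : ∀ S : ShortComplex A, S.ShortExact → S.X₂ ∈ B → S.X₃ ∈ B → S.X₁ ∈ B)
    {M : A} (hM : M ∈ B) (h : ∀ F ∈ Y ∩ B, Ext1Z M F) : M ∈ X := by
  obtain ⟨F, C, i, p, w, hS, hF, hC⟩ := hXY.2.2.1 M
  obtain ⟨e⟩ := (h F ⟨hF, hker _ hS (hXB hC) hM⟩).nonempty_retract hS
  exact hXY.mem_left_of_retract_s1 e hC

lemma isCotorsionPairIn_inter (hXY : IsCompleteCotorsionPair X Y) (hXB : X ⊆ B)
    (hker : ∀ S : ShortComplex A, S.ShortExact → S.X₂ ∈ B → S.X₃ ∈ B → S.X₁ ∈ B) :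
    IsCotorsionPairIn B X (Y ∩ B) :=
  ⟨hXB, fun _ hM => hM.2,
    fun M hM => ⟨fun hMY => (hXY.1 M).1 hMY.1, fun h => ⟨(hXY.1 M).2 h, hM⟩⟩,
    fun M hM => ⟨fun hMX F hF => (hXY.2.1 M).1 hMX F hF.1,
      hXY.mem_left_of_forall_ext1Z_inter hXB hker hM⟩⟩

end IsCompleteCotorsionPair

end

theorem induced_hereditary_cotorsion_pair_general {A : Type u} [Category.{u} A] [Abelian A]
    (B X Y : Set A)
    (hker : ∀ S : ShortComplex A, S.ShortExact → S.X₂ ∈ B → S.X₃ ∈ B → S.X₁ ∈ B)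
    (hXY : IsCompleteCotorsionPair X Y)
    (hHer : ∀ S : ShortComplex A, S.ShortExact → S.X₂ ∈ X → S.X₃ ∈ X → S.X₁ ∈ X)
    (hXB : X ⊆ B) :
    IsCotorsionPairIn B X (Y ∩ B) ∧
    (∀ S : ShortComplex A, S.ShortExact → S.X₁ ∈ B → S.X₂ ∈ B → S.X₃ ∈ B →
      S.X₂ ∈ X → S.X₃ ∈ X → S.X₁ ∈ X) :=
  ⟨hXY.isCotorsionPairIn_inter hXB hker, fun S hS _ _ _ => hHer S hS⟩

/-- If `B` is a full subcategory of an abelian category closed under extensions and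
kernels of epimorphisms, and `(X, Y)` is a complete hereditary cotorsion pair with
`X ⊆ B`, then `(X, Y ∩ B)` is a hereditary cotorsion pair in the exact category `B`
(heredity: the left class is closed under kernels of deflations). -/
theorem induced_hereditary_cotorsion_pair {A : Type u} [Category.{u} A] [Abelian A]
    (B X Y : Set A)
    (hext : ∀ S : ShortComplex A, S.ShortExact → S.X₁ ∈ B → S.X₃ ∈ B → S.X₂ ∈ B)
    (hker : ∀ S : ShortComplex A, S.ShortExact → S.X₂ ∈ B → S.X₃ ∈ B → S.X₁ ∈ B)
    (hXY : IsCompleteCotorsionPair X Y)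
    (hHer : ∀ S : ShortComplex A, S.ShortExact → S.X₂ ∈ X → S.X₃ ∈ X → S.X₁ ∈ X)
    (hXB : X ⊆ B) :
    IsCotorsionPairIn B X (Y ∩ B) ∧
    (∀ S : ShortComplex A, S.ShortExact → S.X₁ ∈ B → S.X₂ ∈ B → S.X₃ ∈ B →
      S.X₂ ∈ X → S.X₃ ∈ X → S.X₁ ∈ X) :=
  induced_hereditary_cotorsion_pair_general B X Y hker hXY hHer hXB
end

section
/- Let A be an abelian category and B a full subcategory closed under extensions and under cokernels of monomorphisms. If (X, Y) is a complete cotorsion pair in A with Y ⊆ B, then (X ∩ B, Y) is a complete cotorsion pair in the exact category B; moreover, if (X, Y) is hereditary in A, then (X ∩ B, Y) is hereditary in B. -/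
universe u

open CategoryTheory

/-!
Special precovers and preenvelopes in `A` of an object of `B` already lie in `B`: their middle,
resp. right, term is an extension of, resp. a cokernel of a monomorphism between, objects of `B`
(recall `Y ⊆ B`). This gives completeness in `B` and all of orthogonality except one point: an
object `M ∈ B` with `Ext¹(X ∩ B, M) = 0` lies in `Y`. For it, the special preenvelope
`0 → M → F → C → 0` has `C ∈ X ∩ B`, hence splits, so `M` is a retract of `F ∈ Y`; and
`Ext¹(C, -) = 0` passes to retracts, since an extension of `C` by `M` is a retract of its pushout
along the split inclusion `M → F`. Heredity restricts from `A` to `B` verbatim.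
-/

open CategoryTheory.Limits

namespace CategoryTheory.ShortComplex

variable {C : Type*} [Category C] [Abelian C]

noncomputable abbrev pushoutAlong (S : ShortComplex C) {Y : C} (a : S.X₁ ⟶ Y) : ShortComplex C :=
  ShortComplex.mk (pushout.inl a S.f) (pushout.desc 0 S.g (by simp)) (pushout.inl_desc _ _ _)

lemma ShortExact.pushoutAlong {S : ShortComplex C} (hS : S.ShortExact) {Y : C} (a : S.X₁ ⟶ Y) :
    (S.pushoutAlong a).ShortExact := by
  have := hS.mono_f
  have := hS.epi_g
  have hg : pushout.inr a S.f ≫ (S.pushoutAlong a).g = S.g := pushout.inr_desc _ _ _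
  have : Epi (S.pushoutAlong a).g := epi_of_epi_fac hg
  refine ⟨exact_of_g_is_cokernel _ (CokernelCofork.IsColimit.ofπ _ _
    (fun t ht => hS.exact.desc (pushout.inr a S.f ≫ t) ?_) (fun t ht => ?_)
    (fun t _ m hm => ?_))⟩
  · rw [← pushout.condition_assoc, ht, comp_zero]
  · apply pushout.hom_ext
    · rw [(S.pushoutAlong a).zero_assoc, zero_comp]; exact ht.symm
    · rw [reassoc_of% hg, hS.exact.g_desc]
  · rw [← cancel_epi S.g, hS.exact.g_desc, ← hm, ← hg, Category.assoc]

end CategoryTheory.ShortComplex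

namespace Ext1Z

variable {A : Type u} [Category.{u} A] [Abelian A]

lemma of_retract_s2 {C M F : A} (h : Retract M F) (hF : Ext1Z C F) : Ext1Z C M := by
  intro E j q w hS
  obtain ⟨t, ht⟩ := hF _ _ _ _ (hS.pushoutAlong h.i)
  let ρ : pushout h.i j ⟶ E := pushout.desc (h.r ≫ j) (𝟙 E) (by simp [reassoc_of% h.retract])
  have hρ : ρ ≫ q = pushout.desc 0 q (by simp [w]) := by
    apply pushout.hom_ext <;>
      simp [ρ, w, pushout.inl_desc, pushout.inr_desc, pushout.inl_desc_assoc, pushout.inr_desc_assoc]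
  exact ⟨t ≫ ρ, by rw [Category.assoc, hρ]; exact ht⟩

lemma of_shortExact {S : ShortComplex A} (hS : S.ShortExact) (hsplit : Ext1Z S.X₃ S.X₁) {C : A}
    (hC : Ext1Z C S.X₂) : Ext1Z C S.X₁ := by
  obtain ⟨s, hs⟩ := hsplit _ _ _ _ hS
  let σ := ShortComplex.Splitting.ofExactOfSection S hS.exact s hs hS.mono_f
  exact of_retract_s2 ⟨S.f, σ.r, σ.f_r⟩ hC

end Ext1Z

namespace IsCompleteCotorsionPair

variable {A : Type u} [Category.{u} A] [Abelian A] {B X Y : Set A}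

lemma exists_precover_inter (hXY : IsCompleteCotorsionPair X Y)
    (hext : ∀ S : ShortComplex A, S.ShortExact → S.X₁ ∈ B → S.X₃ ∈ B → S.X₂ ∈ B)
    (hYB : Y ⊆ B) {M : A} (hM : M ∈ B) :
    ∃ (F C : A) (i : F ⟶ C) (p : C ⟶ M) (w : i ≫ p = 0),
      (ShortComplex.mk i p w).ShortExact ∧ F ∈ Y ∧ C ∈ X ∩ B := by
  obtain ⟨F, C, i, p, w, hS, hF, hC⟩ := hXY.2.2.1 M
  exact ⟨F, C, i, p, w, hS, hF, hC, hext _ hS (hYB hF) hM⟩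

lemma exists_preenvelope_inter (hXY : IsCompleteCotorsionPair X Y)
    (hcoker : ∀ S : ShortComplex A, S.ShortExact → S.X₁ ∈ B → S.X₂ ∈ B → S.X₃ ∈ B)
    (hYB : Y ⊆ B) {M : A} (hM : M ∈ B) :
    ∃ (F C : A) (i : M ⟶ F) (p : F ⟶ C) (w : i ≫ p = 0),
      (ShortComplex.mk i p w).ShortExact ∧ F ∈ Y ∧ C ∈ X ∩ B := by
  obtain ⟨F, C, i, p, w, hS, hF, hC⟩ := hXY.2.2.2 M
  exact ⟨F, C, i, p, w, hS, hF, hC, hcoker _ hS hM (hYB hF)⟩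

lemma mem_right_of_ext1Z_inter (hXY : IsCompleteCotorsionPair X Y)
    (hcoker : ∀ S : ShortComplex A, S.ShortExact → S.X₁ ∈ B → S.X₂ ∈ B → S.X₃ ∈ B)
    (hYB : Y ⊆ B) {M : A} (hM : M ∈ B) (h : ∀ C ∈ X ∩ B, Ext1Z C M) : M ∈ Y := by
  obtain ⟨F, C, i, p, w, hS, hF, hC⟩ := hXY.exists_preenvelope_inter hcoker hYB hM
  exact (hXY.1 M).2 fun C' hC' => Ext1Z.of_shortExact hS (h C hC) ((hXY.1 F).1 hF C' hC')

end IsCompleteCotorsionPair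

/-- Dual version: if `B` is closed under extensions and cokernels of monomorphisms,
and `(X, Y)` is a complete cotorsion pair with `Y ⊆ B`, then `(X ∩ B, Y)` is a complete
cotorsion pair in the exact category `B`; moreover, if `(X, Y)` is hereditary in `A`
(the right class is closed under cokernels of monomorphisms), then `(X ∩ B, Y)` is
hereditary in `B`. -/
theorem induced_complete_cotorsion_pair_dual {A : Type u} [Category.{u} A] [Abelian A]
    (B X Y : Set A)
    (hext : ∀ S : ShortComplex A, S.ShortExact → S.X₁ ∈ B → S.X₃ ∈ B → S.X₂ ∈ B)
    (hcoker : ∀ S : ShortComplex A, S.ShortExact → S.X₁ ∈ B → S.X₂ ∈ B → S.X₃ ∈ B)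
    (hXY : IsCompleteCotorsionPair X Y) (hYB : Y ⊆ B) :
    IsCompleteCotorsionPairIn B (X ∩ B) Y ∧
    ((∀ S : ShortComplex A, S.ShortExact → S.X₁ ∈ Y → S.X₂ ∈ Y → S.X₃ ∈ Y) →
      (∀ S : ShortComplex A, S.ShortExact → S.X₁ ∈ B → S.X₂ ∈ B → S.X₃ ∈ B →
        S.X₁ ∈ Y → S.X₂ ∈ Y → S.X₃ ∈ Y)) := by
  have ⟨hY, hX, _, _⟩ := hXY
  refine ⟨⟨fun _ hC => hC.2, hYB, fun M hM => ⟨?_, ?_⟩, fun M hM => ⟨?_, ?_⟩,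
    fun _ hM => ?_, fun _ hM => ?_⟩, fun hher S hS _ _ _ => hher S hS⟩
  · exact fun hMY C hC => (hY M).1 hMY C hC.1
  · exact hXY.mem_right_of_ext1Z_inter hcoker hYB hM
  · exact fun hMX F hF => (hX M).1 hMX.1 F hF
  · exact fun h => ⟨(hX M).2 h, hM⟩
  · exact hXY.exists_precover_inter hext hYB hM
  · exact hXY.exists_preenvelope_inter hcoker hYB hM
end

section
/- For any ring R and any n ≥ 0, the class P_n of left R-modules of projective dimension at most n is thick inside the class GP_n of modules of Gorenstein projective dimension at most n: if 0 → X → Y → Z → 0 is exact with all three modules in GP_n, and two of X, Y, Z lie in P_n, then so does the third. -/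
universe u

open CategoryTheory

/-- `Ext¹_R(M, N) = 0`, expressed via the splitting of every short exact sequence
`0 → N → E → M → 0` of `R`-modules. -/
def Ext1Vanishes (R : Type u) [Ring R] (M N : ModuleCat.{u} R) : Prop :=
  ∀ (E : ModuleCat.{u} R) (i : N →ₗ[R] E) (p : E →ₗ[R] M),
    Function.Injective i → Function.Surjective p → Function.Exact i p →
    ∃ s : M →ₗ[R] E, ∀ x, p (s x) = x

/-- `pdLE R n M` means that `M` has projective dimension at most `n`. -/
def pdLE (R : Type u) [Ring R] : ℕ → ModuleCat.{u} R → Prop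
  | 0, M => Module.Projective R M
  | n+1, M => ∃ (P : ModuleCat.{u} R) (p : P →ₗ[R] M),
      Module.Projective R P ∧ Function.Surjective p ∧
        pdLE R n (ModuleCat.of R (LinearMap.ker p))

/-- A module is Gorenstein projective if it is a syzygy of an acyclic complex of
projective modules which stays acyclic under `Hom_R(-, Q)` for every projective `Q`. -/
def IsGorensteinProjective (R : Type u) [Ring R] (M : ModuleCat.{u} R) : Prop :=
  ∃ (P : ℤ → ModuleCat.{u} R) (d : ∀ i : ℤ, P i →ₗ[R] P (i+1)),
    (∀ i, Module.Projective R (P i)) ∧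
    (∀ i, Function.Exact (d i) (d (i+1))) ∧
    (∀ (Q : ModuleCat.{u} R), Module.Projective R Q →
      ∀ (i : ℤ) (f : P (i+1) →ₗ[R] Q), f ∘ₗ d i = 0 →
        ∃ g : P (i+1+1) →ₗ[R] Q, g ∘ₗ d (i+1) = f) ∧
    Nonempty (M ≃ₗ[R] LinearMap.ker (d 0))

/-- `GpdLE R n M` means that `M` has Gorenstein projective dimension at most `n`,
i.e. admits a resolution of length `≤ n` by Gorenstein projective modules. -/
def GpdLE (R : Type u) [Ring R] : ℕ → ModuleCat.{u} R → Prop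
  | 0, M => IsGorensteinProjective R M
  | n+1, M => ∃ (G : ModuleCat.{u} R) (p : G →ₗ[R] M),
      IsGorensteinProjective R G ∧ Function.Surjective p ∧
        GpdLE R n (ModuleCat.of R (LinearMap.ker p))

universe v w

open Abelian Limits

/-!
Once `pdLE` is identified with `HasProjectiveDimensionLE`, two of the three cases are the
two-out-of-three properties of projective dimension along short exact sequences. In the remaining
one, `Z` a priori only has projective dimension `≤ n + 1`. But `Extⁱ(G, Q) = 0` for `i ≥ 1` when
`G` is Gorenstein projective and `Q` projective: dimension shifting along the complete resolution
reduces this to `Ext¹`, which vanishes because `Hom(-, Q)` keeps the resolution exact. Hence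
`Extⁱ(Z, Q) = 0` for `i > n`. As `Extⁿ⁺²(Z, -) = 0`, the functor `Extⁿ⁺¹(Z, -)` is right exact;
it vanishes on projectives, hence on all their quotients, so `Z` has projective dimension `≤ n`.
-/

namespace CategoryTheory

variable {C : Type u} [Category.{v} C] [Abelian C] [HasExt.{w} C]

lemma Abelian.Ext.eq_zero_of_iso {X X' Y : C} (e : X ≅ X') {n : ℕ}
    (h : ∀ x : Ext X' Y n, x = 0) (x : Ext X Y n) : x = 0 := by
  rw [← Ext.mk₀_id_comp x, ← e.hom_inv_id, ← Ext.mk₀_comp_mk₀_assoc, h (Ext.comp _ x _),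
    Ext.comp_zero]

namespace ShortComplex.ShortExact

variable {S : ShortComplex C} {Y : C}

lemma ext_X₃_eq_zero (hS : S.ShortExact) {k : ℕ} (h₂ : ∀ x : Ext S.X₂ Y (k + 1), x = 0)
    (h₁ : ∀ x : Ext S.X₁ Y k, x = 0) (x : Ext S.X₃ Y (k + 1)) : x = 0 := by
  obtain ⟨x₁, rfl⟩ := Ext.contravariant_sequence_exact₃ hS Y x (h₂ _) (add_comm 1 k)
  rw [h₁ x₁, Ext.comp_zero]

lemma ext_one_X₃_eq_zero (hS : S.ShortExact) (h₂ : ∀ x : Ext S.X₂ Y 1, x = 0)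
    (hlift : ∀ φ : S.X₁ ⟶ Y, ∃ ψ : S.X₂ ⟶ Y, S.f ≫ ψ = φ) (x : Ext S.X₃ Y 1) : x = 0 := by
  obtain ⟨x₁, rfl⟩ := Ext.contravariant_sequence_exact₃ hS Y x (h₂ _) (add_zero 1)
  obtain ⟨φ, rfl⟩ := (Ext.mk₀_bijective _ _).2 x₁
  obtain ⟨ψ, rfl⟩ := hlift φ
  rw [← Ext.mk₀_comp_mk₀, hS.extClass_comp_assoc]

end ShortComplex.ShortExact

lemma hasProjectiveDimensionLT_of_ext_projective_eq_zero [EnoughProjectives C] {X : C} {n : ℕ}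
    [HasProjectiveDimensionLT X (n + 2)]
    (h : ∀ Q : C, Projective Q → ∀ x : Ext X Q (n + 1), x = 0) :
    HasProjectiveDimensionLT X (n + 1) := by
  rw [hasProjectiveDimensionLT_iff]
  intro i hi Y x
  obtain rfl | hi := hi.eq_or_lt
  · let S := ShortComplex.mk (kernel.ι (Projective.π Y)) (Projective.π Y) (kernel.condition _)
    have hS : S.ShortExact :=
      ShortComplex.ShortExact.mk' (ShortComplex.exact_kernel _) inferInstance inferInstance
    obtain ⟨x₂, rfl⟩ := Ext.covariant_sequence_exact₃ X hS x rfl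
      (Ext.eq_zero_of_hasProjectiveDimensionLT _ (n + 2) le_rfl)
    rw [h _ inferInstance x₂, Ext.zero_comp]
  · exact x.eq_zero_of_hasProjectiveDimensionLT (n + 2) hi

end CategoryTheory

variable {R : Type u} [Ring R]

lemma hasProjectiveDimensionLT_add_two_iff_ker {P M : ModuleCat.{u} R} [Module.Projective R P]
    {p : P →ₗ[R] M} (hp : Function.Surjective p) (n : ℕ) :
    HasProjectiveDimensionLT M (n + 2) ↔
      HasProjectiveDimensionLT (ModuleCat.of R (LinearMap.ker p)) (n + 1) :=
  (LinearMap.shortExact_shortComplexKer hp).hasProjectiveDimensionLT_X₃_iff n inferInstance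

theorem pdLE_iff_hasProjectiveDimensionLE :
    ∀ (n : ℕ) (M : ModuleCat.{u} R), pdLE R n M ↔ HasProjectiveDimensionLE M n
  | 0, M => (IsProjective.iff_projective M).trans (projective_iff_hasProjectiveDimensionLE_zero M)
  | n + 1, M => by
    refine ⟨fun ⟨P, p, _, hp, hK⟩ => ?_, fun h => ?_⟩
    · exact (hasProjectiveDimensionLT_add_two_iff_ker hp n).2
        ((pdLE_iff_hasProjectiveDimensionLE n _).1 hK)
    · have hp := Finsupp.linearCombination_id_surjective R M
      exact ⟨ModuleCat.of R (M →₀ R), _, inferInstance, hp,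
        (pdLE_iff_hasProjectiveDimensionLE n _).2
          ((hasProjectiveDimensionLT_add_two_iff_ker hp n).1 h)⟩

section AcyclicComplex

variable {P : ℤ → ModuleCat.{u} R} {d : ∀ i : ℤ, P i →ₗ[R] P (i + 1)}

noncomputable def kerShortComplex (hexact : ∀ i, Function.Exact (d i) (d (i + 1))) (i : ℤ) :
    ShortComplex (ModuleCat.{u} R) :=
  ShortComplex.moduleCatMk (LinearMap.ker (d i)).subtype
    ((d i).codRestrict (LinearMap.ker (d (i + 1))) fun x => (hexact i).apply_apply_eq_zero x)
    (by ext x; exact x.2)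

lemma shortExact_kerShortComplex (hexact : ∀ i, Function.Exact (d i) (d (i + 1))) (i : ℤ) :
    (kerShortComplex hexact i).ShortExact := by
  refine ModuleCat.shortComplex_shortExact _ (fun x => ?_) (Submodule.injective_subtype _) ?_
  · change (d i).codRestrict _ _ x = 0 ↔ x ∈ Set.range (LinearMap.ker (d i)).subtype
    exact ⟨fun h => ⟨⟨x, congrArg Subtype.val h⟩, rfl⟩, fun ⟨y, hy⟩ => hy ▸ Subtype.ext y.2⟩
  · rintro ⟨y, hy⟩
    obtain ⟨x, rfl⟩ := (hexact i y).1 hy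
    exact ⟨x, rfl⟩

lemma exists_comp_subtype_ker_eq (hexact : ∀ i, Function.Exact (d i) (d (i + 1)))
    {Q : ModuleCat.{u} R}
    (hlift : ∀ (i : ℤ) (f : P (i + 1) →ₗ[R] Q), f ∘ₗ d i = 0 →
      ∃ g : P (i + 1 + 1) →ₗ[R] Q, g ∘ₗ d (i + 1) = f)
    (i : ℤ) (φ : LinearMap.ker (d (i + 1 + 1)) →ₗ[R] Q) :
    ∃ ψ : P (i + 1 + 1) →ₗ[R] Q, ψ ∘ₗ (LinearMap.ker (d (i + 1 + 1))).subtype = φ := by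
  let c := (d (i + 1)).codRestrict (LinearMap.ker (d (i + 1 + 1)))
    fun x => (hexact (i + 1)).apply_apply_eq_zero x
  obtain ⟨ψ, hψ⟩ := hlift i (φ ∘ₗ c) (by
    ext x
    have : c (d i x) = 0 := Subtype.ext ((hexact i).apply_apply_eq_zero x)
    simp [this])
  refine ⟨ψ, LinearMap.ext fun ⟨y, hy⟩ => ?_⟩
  obtain ⟨x, rfl⟩ := (hexact (i + 1) y).1 hy
  exact LinearMap.congr_fun hψ x

lemma ext_ker_eq_zero (hexact : ∀ i, Function.Exact (d i) (d (i + 1)))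
    (hproj : ∀ i, Module.Projective R (P i)) {Q : ModuleCat.{u} R}
    (hlift : ∀ (i : ℤ) (f : P (i + 1) →ₗ[R] Q), f ∘ₗ d i = 0 →
      ∃ g : P (i + 1 + 1) →ₗ[R] Q, g ∘ₗ d (i + 1) = f) :
    ∀ (k : ℕ) (j : ℤ) (x : Ext (ModuleCat.of R (LinearMap.ker (d j))) Q (k + 1)), x = 0
  | 0, j, x => by
    -- `ker d (i + 3)` is the quotient in `kerShortComplex (i + 2)`, whose `ker d (i + 2)` receives
    -- `P (i + 1)` surjectively; that is where `hlift` at `i` applies.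
    obtain ⟨i, rfl⟩ : ∃ i, j = i + 1 + 1 + 1 := ⟨j - 3, by ring⟩
    have := hproj (i + 1 + 1)
    refine (shortExact_kerShortComplex hexact (i + 1 + 1)).ext_one_X₃_eq_zero
      (Ext.eq_zero_of_projective (P := P (i + 1 + 1))) (fun φ => ?_) x
    obtain ⟨ψ, hψ⟩ := exists_comp_subtype_ker_eq hexact hlift i φ.hom
    exact ⟨ModuleCat.ofHom ψ, ModuleCat.hom_ext hψ⟩
  | k + 1, j, x => by
    obtain ⟨i, rfl⟩ : ∃ i, j = i + 1 := ⟨j - 1, by ring⟩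
    have := hproj i
    exact (shortExact_kerShortComplex hexact i).ext_X₃_eq_zero
      (Ext.eq_zero_of_projective (P := P i)) (ext_ker_eq_zero hexact hproj hlift k i) x

end AcyclicComplex

theorem IsGorensteinProjective.ext_eq_zero {G : ModuleCat.{u} R}
    (hG : IsGorensteinProjective R G) (Q : ModuleCat.{u} R) [Projective Q] (k : ℕ)
    (x : Ext G Q (k + 1)) : x = 0 := by
  obtain ⟨P, d, hproj, hexact, hlift, ⟨e⟩⟩ := hG
  exact Ext.eq_zero_of_iso e.toModuleIso
    (ext_ker_eq_zero hexact hproj (hlift Q inferInstance) k 0) x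

theorem GpdLE.ext_eq_zero (Q : ModuleCat.{u} R) [Projective Q] :
    ∀ {n : ℕ} {M : ModuleCat.{u} R}, GpdLE R n M → ∀ i, n < i → ∀ x : Ext M Q i, x = 0
  | _, _, _, 0, hi, _ => absurd hi (Nat.not_lt_zero _)
  | 0, _, hM, k + 1, _, x => IsGorensteinProjective.ext_eq_zero hM Q k x
  | _ + 1, _, ⟨_, _, hG, hq, hK⟩, k + 1, hk, x =>
    (LinearMap.shortExact_shortComplexKer hq).ext_X₃_eq_zero (hG.ext_eq_zero Q k)
      (GpdLE.ext_eq_zero Q hK k (Nat.lt_of_succ_lt_succ hk)) x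

theorem pn_thick_in_gpn_general (R : Type u) [Ring R] (n : ℕ) (X Y Z : ModuleCat.{u} R)
    (i : X →ₗ[R] Y) (p : Y →ₗ[R] Z)
    (hi : Function.Injective i) (hp : Function.Surjective p) (he : Function.Exact i p)
    (hZ : GpdLE R n Z) :
    (pdLE R n X → pdLE R n Y → pdLE R n Z) ∧
    (pdLE R n X → pdLE R n Z → pdLE R n Y) ∧
    (pdLE R n Y → pdLE R n Z → pdLE R n X) := by
  have hS := ModuleCat.shortComplex_shortExact
    (ShortComplex.moduleCatMk i p he.linearMap_comp_eq_zero) he hi hp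
  simp only [pdLE_iff_hasProjectiveDimensionLE]
  refine ⟨fun hX hY => ?_, fun hX hZ' => hS.hasProjectiveDimensionLT_X₂ _ hX hZ',
    fun hY hZ' => hS.hasProjectiveDimensionLT_X₁ _ hY
      (hasProjectiveDimensionLT_of_ge Z (n + 1) (n + 2) n.succ.le_succ)⟩
  have : HasProjectiveDimensionLT Z (n + 2) := hS.hasProjectiveDimensionLT_X₃ (n + 1) hX
    (hasProjectiveDimensionLT_of_ge Y (n + 1) (n + 2) n.succ.le_succ)
  exact hasProjectiveDimensionLT_of_ext_projective_eq_zero fun Q _ =>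
    hZ.ext_eq_zero Q (n + 1) n.lt_succ_self

/-- For any ring `R` and `n ≥ 0`, the class `P_n` is thick inside `GP_n`:
in a short exact sequence of modules of Gorenstein projective dimension `≤ n`,
if two of the three terms have projective dimension `≤ n`, then so does the third. -/
theorem pn_thick_in_gpn (R : Type u) [Ring R] (n : ℕ) (X Y Z : ModuleCat.{u} R)
    (i : X →ₗ[R] Y) (p : Y →ₗ[R] Z)
    (hi : Function.Injective i) (hp : Function.Surjective p) (he : Function.Exact i p)
    (hX : GpdLE R n X) (hY : GpdLE R n Y) (hZ : GpdLE R n Z) :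
    (pdLE R n X → pdLE R n Y → pdLE R n Z) ∧
    (pdLE R n X → pdLE R n Z → pdLE R n Y) ∧
    (pdLE R n Y → pdLE R n Z → pdLE R n X) :=
  pn_thick_in_gpn_general R n X Y Z i p hi hp he hZ
end

section
/- Let R be a ring and M a Gorenstein projective left R-module of finite projective dimension. Then M is projective. -/
/-!
Let `P` be a totally acyclic complex of projectives with `M ≅ ker d₀`. Say that `L` is Hom-exact
for `P` when `Hom(P, L)` is exact. Projectives are Hom-exact by total acyclicity, and if
`0 → K → E → L → 0` is exact with `K`, `E` Hom-exact then so is `L`, since maps out of the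
projective `Pᵢ` lift along `E → L`; by induction on the
projective dimension, `M` itself is Hom-exact. Extending `d₋₁ : P₋₁ → M` along `d₋₁ : P₋₁ → P₀`
then gives a retraction `P₀ → M` of the inclusion, so `M` is a summand of `P₀`.
-/

universe u

open CategoryTheory

section HomExact

variable {R : Type u} [Ring R] {P : ℤ → ModuleCat.{u} R} (d : ∀ i : ℤ, P i →ₗ[R] P (i+1))

def HomExact (L : Type*) [AddCommGroup L] [Module R L] : Prop :=
  ∀ (j : ℤ) (f : P j →ₗ[R] L), LinearMap.ker (d j) ≤ LinearMap.ker f →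
    ∃ g : P (j+1) →ₗ[R] L, g ∘ₗ d j = f

variable {d}

lemma homExact_of_lift (hd : ∀ i, d (i+1) ∘ₗ d i = 0)
    {L : Type*} [AddCommGroup L] [Module R L]
    (hlift : ∀ (i : ℤ) (f : P (i+1) →ₗ[R] L), f ∘ₗ d i = 0 →
      ∃ g : P (i+1+1) →ₗ[R] L, g ∘ₗ d (i+1) = f) :
    HomExact d L := by
  intro j f hf
  obtain ⟨i, rfl⟩ : ∃ i : ℤ, j = i + 1 := ⟨j - 1, by ring⟩
  exact hlift i f (LinearMap.ext fun x => hf (LinearMap.congr_fun (hd i) x))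

lemma homExact_of_surjective (hproj : ∀ i, Module.Projective R (P i))
    (hexact : ∀ i, Function.Exact (d i) (d (i+1)))
    {E L : Type*} [AddCommGroup E] [Module R E] [AddCommGroup L] [Module R L]
    (p : E →ₗ[R] L) (hp : Function.Surjective p)
    (hE : HomExact d E) (hK : HomExact d (LinearMap.ker p)) :
    HomExact d L := by
  intro j f hf
  obtain ⟨i, rfl⟩ : ∃ i : ℤ, j = i + 1 := ⟨j - 1, by ring⟩
  obtain ⟨f₁, hf₁⟩ := Module.projective_lifting_property p f hp
  have hf₁d : ∀ x, f₁ (d i x) ∈ LinearMap.ker p := fun x => by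
    rw [LinearMap.mem_ker, ← LinearMap.comp_apply, hf₁]
    exact hf ((hexact i).apply_apply_eq_zero x)
  -- Subtract from `f₁` a map into `ker p` agreeing with it on `range (d i) = ker (d (i+1))`.
  obtain ⟨g₁, hg₁⟩ := hK i ((f₁ ∘ₗ d i).codRestrict _ hf₁d) fun x hx => by
    simp_all [LinearMap.mem_ker]
  set f₂ := f₁ - (LinearMap.ker p).subtype ∘ₗ g₁
  have hf₂ : LinearMap.ker (d (i+1)) ≤ LinearMap.ker f₂ := by
    rintro _ hy
    obtain ⟨x, rfl⟩ := (hexact i _).mp hy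
    have hx : (g₁ (d i x) : E) = f₁ (d i x) := congrArg Subtype.val (LinearMap.congr_fun hg₁ x)
    simp [f₂, hx]
  obtain ⟨g₂, hg₂⟩ := hE (i+1) f₂ hf₂
  refine ⟨p ∘ₗ g₂, ?_⟩
  rw [LinearMap.comp_assoc, hg₂, ← hf₁]
  ext x
  simp [f₂, LinearMap.mem_ker.mp (g₁ x).2]

lemma homExact_of_pdLE (hproj : ∀ i, Module.Projective R (P i))
    (hexact : ∀ i, Function.Exact (d i) (d (i+1)))
    (hQ : ∀ Q : ModuleCat.{u} R, Module.Projective R Q → HomExact d Q) :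
    ∀ (n : ℕ) (L : ModuleCat.{u} R), pdLE R n L → HomExact d L
  | 0, L, hL => hQ L hL
  | n+1, _, ⟨E, p, hE, hp, hK⟩ =>
    homExact_of_surjective hproj hexact p hp (hQ E hE)
      (homExact_of_pdLE hproj hexact hQ n _ hK)

lemma projective_of_homExact {j : ℤ} [Module.Projective R (P (j+1))]
    (hexact : Function.Exact (d j) (d (j+1)))
    {M : Type*} [AddCommGroup M] [Module R M] (hM : HomExact d M)
    (e : M ≃ₗ[R] LinearMap.ker (d (j+1))) :
    Module.Projective R M := by
  set f := e.symm.toLinearMap ∘ₗ (d j).codRestrict _ hexact.apply_apply_eq_zero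
  obtain ⟨g, hg⟩ := hM j f fun x hx => by
    simp only [f, LinearMap.mem_ker, LinearMap.comp_apply, LinearEquiv.coe_coe,
      LinearEquiv.map_eq_zero_iff]
    exact Subtype.ext hx
  refine Module.Projective.of_split ((LinearMap.ker (d (j+1))).subtype ∘ₗ e.toLinearMap) g ?_
  ext m
  obtain ⟨x, hx⟩ := (hexact _).mp (e m).2
  have hxe : (d j).codRestrict _ hexact.apply_apply_eq_zero x = e m := Subtype.ext hx
  simpa [← hx, f, hxe] using LinearMap.congr_fun hg x

end HomExact

/-- A Gorenstein projective module of finite projective dimension is projective. -/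
theorem gorensteinProjective_finite_pd_projective (R : Type u) [Ring R]
    (M : ModuleCat.{u} R) (hGP : IsGorensteinProjective R M)
    (n : ℕ) (hpd : pdLE R n M) :
    Module.Projective R M := by
  obtain ⟨P, d, hproj, hexact, hlift, ⟨e⟩⟩ := hGP
  have hd : ∀ i, d (i+1) ∘ₗ d i = 0 := fun i => (hexact i).linearMap_comp_eq_zero
  have hM : HomExact d M := homExact_of_pdLE hproj hexact
    (fun Q hQ => homExact_of_lift hd (hlift Q hQ)) n M hpd
  have := hproj 0
  exact projective_of_homExact (j := -1) (hexact (-1)) hM e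
end

section
/- Let R be a ring, n ≥ 0, and M a module with Gorenstein projective dimension at most n (n ≥ 1). Then there is a short exact sequence 0 → K → G → M → 0 with G Gorenstein projective and K of projective dimension at most n − 1, which remains exact after applying Hom_R(-, X) for every module X with Ext¹_R(L, X) = 0 for all L of projective dimension ≤ n. -/
universe u

open CategoryTheory

/-!
Write `Gpd M ≤ n + 1` as `0 → K₀ → G₀ → M → 0` with `G₀` Gorenstein projective and
`Gpd K₀ ≤ n`. Inductively `K₀` embeds into a module `W` with `pd W ≤ n` and Gorenstein projective
cokernel `C`. The pushout `E` of `G₀ ← K₀ → W` is an extension of `M` by `W` and of `C` by `G₀`,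
so `E` is Gorenstein projective: the class is closed under extensions, by the horseshoe lemma run
in both directions along complete resolutions. Pushing out an embedding of `E` into a projective
along `E ↠ M` gives the embedding of `M` needed for the next step.

For the `Hom` condition, embed `G` into a projective `P`: then `pd (P / K) ≤ n`, so
`Ext¹(P / K, X) = 0`, and every map `K → X` extends to `P`, hence to `G`.
-/

open Function LinearMap

section LinearAlgebra

variable {R : Type*} [Ring R] {A B C : Type*} [AddCommGroup A] [Module R A]
  [AddCommGroup B] [Module R B] [AddCommGroup C] [Module R C]

theorem LinearMap.exists_comp_eq_of_surjective {p : A →ₗ[R] B} (hp : Surjective p)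
    {f : A →ₗ[R] C} (h : ker p ≤ ker f) : ∃ g : B →ₗ[R] C, g ∘ₗ p = f :=
  ⟨(ker p).liftQ f h ∘ₗ (p.quotKerEquivOfSurjective hp).symm, by ext; simp⟩

theorem Function.Exact.exists_comp_eq {f : A →ₗ[R] B} {g : B →ₗ[R] C} (hfg : Exact f g)
    (hg : Surjective g) {D : Type*} [AddCommGroup D] [Module R D] {h : B →ₗ[R] D}
    (hh : h ∘ₗ f = 0) : ∃ k : C →ₗ[R] D, k ∘ₗ g = h :=
  LinearMap.exists_comp_eq_of_surjective hg <| by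
    rw [hfg.linearMap_ker_eq, range_le_ker_iff]; exact hh

theorem LinearMap.exists_comp_eq_of_injective {i : B →ₗ[R] C} (hi : Injective i)
    {f : A →ₗ[R] C} (h : range f ≤ range i) : ∃ g : A →ₗ[R] B, i ∘ₗ g = f :=
  ⟨(LinearEquiv.ofInjective i hi).symm ∘ₗ f.codRestrict _ (fun x => h ⟨x, rfl⟩), by
    ext x
    exact congrArg Subtype.val ((LinearEquiv.ofInjective i hi).apply_symm_apply _)⟩

end LinearAlgebra

namespace LinearMap

section Pushout

variable {R : Type*} [Ring R] {A B W : Type*} [AddCommGroup A] [Module R A]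
  [AddCommGroup B] [Module R B] [AddCommGroup W] [Module R W] (m : A →ₗ[R] B) (u : A →ₗ[R] W)

abbrev Pushout : Type _ := (B × W) ⧸ range (m.prod (-u))

def Pushout.inl : B →ₗ[R] Pushout m u := (range (m.prod (-u))).mkQ ∘ₗ LinearMap.inl R B W

def Pushout.inr : W →ₗ[R] Pushout m u := (range (m.prod (-u))).mkQ ∘ₗ LinearMap.inr R B W

variable {m u}

theorem Pushout.inl_comp : inl m u ∘ₗ m = inr m u ∘ₗ u := by
  ext a
  refine (Submodule.Quotient.eq _).mpr ⟨a, ?_⟩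
  simp

def Pushout.desc {D : Type*} [AddCommGroup D] [Module R D] (f : B →ₗ[R] D) (g : W →ₗ[R] D)
    (h : f ∘ₗ m = g ∘ₗ u) : Pushout m u →ₗ[R] D :=
  (range (m.prod (-u))).liftQ (f.coprod g) <| by
    rintro _ ⟨a, rfl⟩
    simpa [← sub_eq_add_neg, sub_eq_zero] using LinearMap.congr_fun h a

variable {D : Type*} [AddCommGroup D] [Module R D]

@[simp]
theorem Pushout.desc_inl (f : B →ₗ[R] D) (g : W →ₗ[R] D) (h : f ∘ₗ m = g ∘ₗ u) (b : B) :
    desc f g h (inl m u b) = f b := by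
  simp [desc, inl]

@[simp]
theorem Pushout.desc_inr (f : B →ₗ[R] D) (g : W →ₗ[R] D) (h : f ∘ₗ m = g ∘ₗ u) (w : W) :
    desc f g h (inr m u w) = g w := by
  simp [desc, inr]

theorem Pushout.exists_inl_add_inr : ∀ z : Pushout m u, ∃ b w, inl m u b + inr m u w = z := by
  intro z
  obtain ⟨⟨b, w⟩, rfl⟩ := Submodule.mkQ_surjective _ z
  refine ⟨b, w, ?_⟩
  rw [inl, inr, comp_apply, comp_apply, ← map_add]
  simp

theorem Pushout.inr_injective (hm : Injective m) : Injective (inr m u) := by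
  refine (injective_iff_map_eq_zero _).mpr fun w hw => ?_
  obtain ⟨a, ha⟩ := (Submodule.Quotient.mk_eq_zero _).mp hw
  simp only [prod_apply, Function.prod, neg_apply, coe_inr, Prod.mk.injEq] at ha
  rw [← ha.2, hm (ha.1.trans m.map_zero.symm), map_zero, neg_zero]

theorem Pushout.inl_injective (hu : Injective u) : Injective (inl m u) := by
  refine (injective_iff_map_eq_zero _).mpr fun b hb => ?_
  obtain ⟨a, ha⟩ := (Submodule.Quotient.mk_eq_zero _).mp hb
  simp only [prod_apply, Function.prod, neg_apply, coe_inl, Prod.mk.injEq, neg_eq_zero] at ha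
  rw [← ha.1, hu (ha.2.trans u.map_zero.symm), map_zero]

theorem Pushout.desc_surjective_of_left {f : B →ₗ[R] D} (hf : Surjective f) (g : W →ₗ[R] D)
    (h : f ∘ₗ m = g ∘ₗ u) : Surjective (desc f g h) := fun x =>
  let ⟨b, hb⟩ := hf x; ⟨inl m u b, by rw [desc_inl, hb]⟩

theorem Pushout.desc_surjective_of_right (f : B →ₗ[R] D) {g : W →ₗ[R] D} (hg : Surjective g)
    (h : f ∘ₗ m = g ∘ₗ u) : Surjective (desc f g h) := fun x =>
  let ⟨w, hw⟩ := hg x; ⟨inr m u w, by rw [desc_inr, hw]⟩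

theorem Pushout.inl_surjective (hu : Surjective u) : Surjective (inl m u) := by
  intro z
  obtain ⟨b, w, rfl⟩ := exists_inl_add_inr z
  obtain ⟨a, rfl⟩ := hu w
  exact ⟨b + m a, by rw [map_add, ← LinearMap.comp_apply (inl m u), inl_comp, LinearMap.comp_apply]⟩

theorem Pushout.exact_inr {c : B →ₗ[R] D} (hmc : Exact m c) (h : c ∘ₗ m = 0 ∘ₗ u) :
    Exact (inr m u) (desc c 0 h) := by
  intro z
  obtain ⟨b, w, rfl⟩ := exists_inl_add_inr z
  simp only [map_add, desc_inl, desc_inr, zero_apply, add_zero]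
  constructor
  · intro hb
    obtain ⟨a, rfl⟩ := (hmc b).mp hb
    exact ⟨u a + w, by rw [map_add, ← comp_apply, ← inl_comp, comp_apply]⟩
  · rintro ⟨w', hw'⟩
    have := congrArg (desc c 0 h) hw'
    simpa using this.symm

theorem Pushout.exact_inl {v : W →ₗ[R] D} (huv : Exact u v) (h : 0 ∘ₗ m = v ∘ₗ u) :
    Exact (inl m u) (desc 0 v h) := by
  intro z
  obtain ⟨b, w, rfl⟩ := exists_inl_add_inr z
  simp only [map_add, desc_inl, desc_inr, zero_apply, zero_add]
  constructor
  · intro hw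
    obtain ⟨a, rfl⟩ := (huv w).mp hw
    exact ⟨b + m a, by rw [map_add, ← comp_apply (inl m u), inl_comp, comp_apply]⟩
  · rintro ⟨b', hb'⟩
    have := congrArg (desc 0 v h) hb'
    simpa using this.symm

theorem Pushout.exact_comp_inl {K : Type*} [AddCommGroup K] [Module R K]
    {i : K →ₗ[R] A} (hiu : Exact i u) : Exact (m ∘ₗ i) (inl m u) := by
  intro b
  rw [inl, LinearMap.comp_apply, Submodule.mkQ_apply, Submodule.Quotient.mk_eq_zero]
  constructor
  · rintro ⟨a, ha⟩
    simp only [prod_apply, Function.prod, neg_apply, coe_inl, Prod.mk.injEq, neg_eq_zero] at ha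
    obtain ⟨k, rfl⟩ := (hiu a).mp ha.2
    exact ⟨k, ha.1⟩
  · rintro ⟨k, rfl⟩
    exact ⟨i k, by simp [hiu.apply_apply_eq_zero]⟩

end Pushout

end LinearMap

section HomExtends

variable {R : Type u} [Ring R]

/-- `Ext¹_R(B, Q) = 0`, in the form: `Hom_R(-, Q)` is exact on every short exact sequence
`0 → M → N → B → 0`. -/
def HomExtends (B Q : ModuleCat.{u} R) : Prop :=
  ∀ ⦃M N : ModuleCat.{u} R⦄ (m : M →ₗ[R] N) (c : N →ₗ[R] B),
    Injective m → Surjective c → Exact m c → ∀ φ : M →ₗ[R] Q, ∃ ψ : N →ₗ[R] Q, ψ ∘ₗ m = φ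

theorem Ext1Vanishes.homExtends {B Q : ModuleCat.{u} R} (h : Ext1Vanishes R B Q) :
    HomExtends B Q := by
  intro M N m c hm hc hmc φ
  have hcm : c ∘ₗ m = 0 ∘ₗ φ := by rw [hmc.linearMap_comp_eq_zero, zero_comp]
  have hinr := Pushout.inr_injective (u := φ) hm
  have hdesc := Pushout.desc_surjective_of_left hc 0 hcm
  have hexact := Pushout.exact_inr hmc hcm
  obtain ⟨s, hs⟩ := h (ModuleCat.of R (Pushout m φ)) _ _ hinr hdesc hexact
  have hsection : ∃ l, Pushout.desc c 0 hcm ∘ₗ l = LinearMap.id := ⟨s, LinearMap.ext hs⟩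
  obtain ⟨r, hr⟩ := ((hexact.split_tfae hinr hdesc).out 0 1).mp hsection
  exact ⟨r ∘ₗ Pushout.inl m φ, by
    rw [LinearMap.comp_assoc, Pushout.inl_comp, ← LinearMap.comp_assoc, hr, LinearMap.id_comp]⟩

/-- Lifting `π` to `N` presents `N` as a quotient of `M × P`, through which the
required extension is defined. -/
theorem homExtends_of_exact {K P C Q : ModuleCat.{u} R} [Module.Projective R P]
    {ι : K →ₗ[R] P} {π : P →ₗ[R] C} (hπ : Surjective π) (hιπ : Exact ι π)
    (hext : ∀ φ : K →ₗ[R] Q, ∃ g : P →ₗ[R] Q, g ∘ₗ ι = φ) : HomExtends C Q := by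
  intro M N m c hm hc hmc φ
  obtain ⟨β, hβ⟩ := Module.projective_lifting_property c π hc
  obtain ⟨γ, hγ⟩ : ∃ γ : K →ₗ[R] M, m ∘ₗ γ = β ∘ₗ ι := by
    refine exists_comp_eq_of_injective hm ?_
    rintro _ ⟨k, rfl⟩
    rw [← hmc.linearMap_ker_eq, mem_ker, ← LinearMap.comp_apply, ← LinearMap.comp_assoc, hβ, LinearMap.comp_apply,
      hιπ.apply_apply_eq_zero]
  obtain ⟨g, hg⟩ := hext (φ ∘ₗ γ)
  have hsurj : Surjective (m.coprod β) := by
    intro n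
    obtain ⟨p, hp⟩ := hπ (c n)
    obtain ⟨x, hx⟩ := (hmc (n - β p)).mp (by
      rw [map_sub, ← LinearMap.comp_apply c β, hβ, hp, sub_self])
    exact ⟨(x, p), by simp [hx]⟩
  obtain ⟨ψ, hψ⟩ := exists_comp_eq_of_surjective hsurj (f := φ.coprod g) <| by
    rintro ⟨x, p⟩ hxp
    simp only [mem_ker, coprod_apply] at hxp ⊢
    have hp : π p = 0 := by
      rw [← hβ, LinearMap.comp_apply, ← neg_eq_of_add_eq_zero_right hxp, map_neg,
        hmc.apply_apply_eq_zero, neg_zero]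
    obtain ⟨k, rfl⟩ := (hιπ p).mp hp
    have hx : x = -γ k := hm <| by
      rw [map_neg, ← LinearMap.comp_apply m γ, hγ, LinearMap.comp_apply,
        eq_neg_iff_add_eq_zero, hxp]
    rw [hx, ← LinearMap.comp_apply g ι, hg, LinearMap.comp_apply, map_neg, neg_add_cancel]
  exact ⟨ψ, by rw [← coprod_inl m β, ← LinearMap.comp_assoc, hψ, coprod_inl]⟩

/-- Extend first to the preimage `N'` of `f(A)`, using `0 → M → N' → A → 0`, then to `N`, using
`0 → N' → N → C → 0`. -/
theorem HomExtends.of_exact {A B C Q : ModuleCat.{u} R} {f : A →ₗ[R] B} {g : B →ₗ[R] C}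
    (hf : Injective f) (hg : Surjective g) (hfg : Exact f g) (hA : HomExtends A Q)
    (hC : HomExtends C Q) : HomExtends B Q := by
  intro M N m c hm hc hmc φ
  set N' := ker (g ∘ₗ c)
  have hmN' (x : M) : m x ∈ N' := by simp [N', hmc.apply_apply_eq_zero]
  obtain ⟨c', hc'⟩ : ∃ c' : N' →ₗ[R] A, f ∘ₗ c' = c ∘ₗ N'.subtype :=
    exists_comp_eq_of_injective hf (by rintro _ ⟨z, rfl⟩; exact (hfg _).mp z.2)
  have hc'_apply (z : N') : f (c' z) = c z := LinearMap.congr_fun hc' z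
  have hsurj : Surjective c' := by
    intro a
    obtain ⟨x, hx⟩ := hc (f a)
    have hx' : x ∈ N' := by simp [N', hx, hfg.apply_apply_eq_zero]
    exact ⟨⟨x, hx'⟩, hf (by rw [hc'_apply, hx])⟩
  have hexact : Exact (m.codRestrict N' hmN') c' := by
    intro z
    rw [← map_eq_zero_iff f hf, hc'_apply, hmc]
    simp [Subtype.ext_iff]
  obtain ⟨ψ₁, hψ₁⟩ := hA (N := ModuleCat.of R N') (m.codRestrict N' hmN') c'
    (fun x y hxy => hm (congrArg Subtype.val hxy)) hsurj hexact φ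
  obtain ⟨ψ, hψ⟩ := hC (M := ModuleCat.of R N') N'.subtype (g ∘ₗ c) N'.injective_subtype
    (hg.comp hc) (exact_subtype_ker_map _) ψ₁
  refine ⟨ψ, LinearMap.ext fun x => ?_⟩
  rw [← hψ₁, LinearMap.comp_apply, ← hψ]
  rfl

end HomExtends

/-- A totally acyclic complex of projectives, presented through its syzygies `Z i` and the short
exact sequences `0 → Z i → P i → Z (i + 1) → 0` into which it splices. -/
structure SyzygyChain (R : Type u) [Ring R] : Type (u + 1) where
  Z : ℤ → ModuleCat.{u} R
  P : ℤ → ModuleCat.{u} R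
  ι : ∀ i, Z i →ₗ[R] P i
  π : ∀ i, P i →ₗ[R] Z (i + 1)
  projective : ∀ i, Module.Projective R (P i)
  injective_ι : ∀ i, Injective (ι i)
  surjective_π : ∀ i, Surjective (π i)
  exact : ∀ i, Exact (ι i) (π i)
  exists_comp_ι_eq : ∀ i (Q : ModuleCat.{u} R), Module.Projective R Q →
    ∀ φ : Z i →ₗ[R] Q, ∃ g : P i →ₗ[R] Q, g ∘ₗ ι i = φ

namespace SyzygyChain

variable {R : Type u} [Ring R] (c : SyzygyChain R)

def shift : SyzygyChain R where
  Z i := c.Z (i + 1)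
  P i := c.P (i + 1)
  ι i := c.ι (i + 1)
  π i := c.π (i + 1)
  projective i := c.projective (i + 1)
  injective_ι i := c.injective_ι (i + 1)
  surjective_π i := c.surjective_π (i + 1)
  exact i := c.exact (i + 1)
  exists_comp_ι_eq i := c.exists_comp_ι_eq (i + 1)

theorem homExtends (i : ℤ) {Q : ModuleCat.{u} R} (hQ : Module.Projective R Q) :
    HomExtends (c.Z i) Q := by
  obtain ⟨j, rfl⟩ : ∃ j, i = j + 1 := ⟨i - 1, by omega⟩
  have := c.projective j
  exact homExtends_of_exact (c.surjective_π j) (c.exact j) (c.exists_comp_ι_eq j Q hQ)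

theorem isGorensteinProjective : IsGorensteinProjective R (c.Z 0) := by
  have hd (i : ℤ) : Exact (c.ι (i + 1) ∘ₗ c.π i) (c.ι (i + 1 + 1) ∘ₗ c.π (i + 1)) := by
    rw [(c.surjective_π i).comp_exact_iff_exact, (c.injective_ι _).comp_exact_iff_exact]
    exact c.exact (i + 1)
  refine ⟨c.P, fun i => c.ι (i + 1) ∘ₗ c.π i, c.projective, hd, ?_, ?_⟩
  · intro Q hQ i F hF
    have hFι : F ∘ₗ c.ι (i + 1) = 0 := by
      ext z
      obtain ⟨p, rfl⟩ := c.surjective_π i z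
      exact LinearMap.congr_fun hF p
    obtain ⟨G, rfl⟩ := (c.exact (i + 1)).exists_comp_eq (c.surjective_π (i + 1)) hFι
    obtain ⟨g, hg⟩ := c.exists_comp_ι_eq (i + 1 + 1) Q hQ G
    exact ⟨g, by rw [← LinearMap.comp_assoc, hg]⟩
  · have hker : ker (c.ι (0 + 1) ∘ₗ c.π 0) = range (c.ι 0) := by
      rw [ker_comp_of_ker_eq_bot _ (ker_eq_bot.mpr (c.injective_ι _)),
        (c.exact 0).linearMap_ker_eq]
    exact ⟨(LinearEquiv.ofInjective _ (c.injective_ι 0)).trans (LinearEquiv.ofEq _ _ hker.symm)⟩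

end SyzygyChain

namespace IsGorensteinProjective

variable {R : Type u} [Ring R]

theorem exists_syzygyChain {M : ModuleCat.{u} R} (hM : IsGorensteinProjective R M) :
    ∃ c : SyzygyChain R, Nonempty (M ≃ₗ[R] c.Z 0) := by
  obtain ⟨P, d, hP, hd, hlift, ⟨e⟩⟩ := hM
  let π (i : ℤ) : P i →ₗ[R] ker (d (i + 1)) :=
    (d i).codRestrict _ fun x => (hd i).apply_apply_eq_zero x
  have hπ (i : ℤ) : Surjective (π i) := by
    rintro ⟨y, hy⟩
    obtain ⟨x, rfl⟩ := (hd i y).mp hy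
    exact ⟨x, rfl⟩
  have hext (i : ℤ) (Q : ModuleCat.{u} R) (hQ : Module.Projective R Q)
      (φ : ker (d i) →ₗ[R] Q) : ∃ g : P i →ₗ[R] Q, g ∘ₗ (ker (d i)).subtype = φ := by
    obtain ⟨j, rfl⟩ : ∃ j, i = j + 1 + 1 := ⟨i - 2, by omega⟩
    obtain ⟨g, hg⟩ := hlift Q hQ j (φ ∘ₗ π (j + 1)) <| by
      ext x
      have : π (j + 1) (d j x) = 0 := Subtype.ext ((hd j).apply_apply_eq_zero x)
      simp [this]
    refine ⟨g, LinearMap.ext fun z => ?_⟩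
    obtain ⟨x, rfl⟩ := hπ (j + 1) z
    exact LinearMap.congr_fun hg x
  refine ⟨⟨fun i => ModuleCat.of R (ker (d i)), P, fun i => (ker (d i)).subtype, π, hP,
    fun i => (ker (d i)).injective_subtype, hπ, fun i => ?_, hext⟩, ⟨e⟩⟩
  intro x
  constructor
  · intro hx
    exact ⟨⟨x, congrArg Subtype.val hx⟩, rfl⟩
  · rintro ⟨y, rfl⟩
    exact Subtype.ext y.2

theorem exists_exact_projective {G : ModuleCat.{u} R} (hG : IsGorensteinProjective R G) :
    ∃ (P C : ModuleCat.{u} R) (j : G →ₗ[R] P) (v : P →ₗ[R] C), Module.Projective R P ∧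
      Injective j ∧ Surjective v ∧ Exact j v ∧ IsGorensteinProjective R C := by
  obtain ⟨c, ⟨e⟩⟩ := hG.exists_syzygyChain
  refine ⟨c.P 0, c.Z (0 + 1), c.ι 0 ∘ₗ e, c.π 0, c.projective 0,
    (c.injective_ι 0).comp e.injective, c.surjective_π 0, ?_, c.shift.isGorensteinProjective⟩
  exact LinearEquiv.precomp_exact_iff_exact.mpr (c.exact 0)

end IsGorensteinProjective

section Horseshoe

variable {R : Type*} [Ring R] {A E B P Q A' E' B' : Type*}
  [AddCommGroup A] [Module R A] [AddCommGroup E] [Module R E] [AddCommGroup B] [Module R B]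
  [AddCommGroup P] [Module R P] [AddCommGroup Q] [Module R Q]
  [AddCommGroup A'] [Module R A'] [AddCommGroup E'] [Module R E'] [AddCommGroup B'] [Module R B']
  {ιA : A →ₗ[R] P} {πA : P →ₗ[R] A'} {ιB : B →ₗ[R] Q} {πB : Q →ₗ[R] B'}

/-- The step of the horseshoe lemma towards cokernels. -/
theorem exists_shortExact_quotient_prod {f : A →ₗ[R] E} {g : E →ₗ[R] B} (hg : Surjective g)
    (hfg : Exact f g) (hιA : Injective ιA) (hA : Exact ιA πA) (hπA : Surjective πA)
    (hιB : Injective ιB) (hB : Exact ιB πB) (hπB : Surjective πB)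
    {α : E →ₗ[R] P} (hα : α ∘ₗ f = ιA) :
    Injective (α.prod (ιB ∘ₗ g)) ∧
      ∃ (f' : A' →ₗ[R] (P × Q) ⧸ range (α.prod (ιB ∘ₗ g)))
        (g' : (P × Q) ⧸ range (α.prod (ιB ∘ₗ g)) →ₗ[R] B'),
        Injective f' ∧ Surjective g' ∧ Exact f' g' := by
  set V := range (α.prod (ιB ∘ₗ g))
  have hα_apply (a : A) : α (f a) = ιA a := LinearMap.congr_fun hα a
  have hE (e : E) (he : ιB (g e) = 0) : ∃ a, f a = e :=
    (hfg e).mp ((map_eq_zero_iff ιB hιB).mp he)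
  have hinl_mem (a : A) : (ιA a, (0 : Q)) ∈ V :=
    ⟨f a, by simp [hα_apply, hfg.apply_apply_eq_zero]⟩
  obtain ⟨f', hf'⟩ := hA.exists_comp_eq hπA (h := V.mkQ ∘ₗ LinearMap.inl R P Q) <| by
    ext a
    simpa using hinl_mem a
  have hf'_apply (p : P) : f' (πA p) = V.mkQ (p, 0) := LinearMap.congr_fun hf' p
  let g' : (P × Q) ⧸ V →ₗ[R] B' := V.liftQ (πB ∘ₗ snd R P Q) <| by
    rintro _ ⟨e, rfl⟩
    simp [hB.apply_apply_eq_zero]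
  refine ⟨fun e₁ e₂ he => ?_, f', g', ?_, ?_, ?_⟩
  · rw [← sub_eq_zero, ← map_sub] at he
    rw [← sub_eq_zero]
    obtain ⟨a, ha⟩ := hE _ (congrArg Prod.snd he)
    have hιa : ιA a = 0 := by rw [← hα_apply, ha]; exact congrArg Prod.fst he
    rw [← ha, (map_eq_zero_iff ιA hιA).mp hιa, map_zero]
  · refine (injective_iff_map_eq_zero _).mpr fun a' ha' => ?_
    obtain ⟨p, rfl⟩ := hπA a'
    rw [hf'_apply, Submodule.mkQ_apply, Submodule.Quotient.mk_eq_zero] at ha'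
    obtain ⟨e, he⟩ := ha'
    obtain ⟨a, rfl⟩ := hE e (congrArg Prod.snd he)
    have hp : α (f a) = p := congrArg Prod.fst he
    rw [← hp, hα_apply]
    exact hA.apply_apply_eq_zero a
  · intro b'
    obtain ⟨q, rfl⟩ := hπB b'
    exact ⟨V.mkQ (0, q), rfl⟩
  · intro z
    obtain ⟨⟨p, q⟩, rfl⟩ := V.mkQ_surjective z
    constructor
    · intro hq
      obtain ⟨b, rfl⟩ := (hB q).mp hq
      obtain ⟨e, rfl⟩ := hg b
      refine ⟨πA (p - α e), ?_⟩
      rw [hf'_apply, Submodule.mkQ_apply, Submodule.mkQ_apply, Submodule.Quotient.eq]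
      exact ⟨-e, by simp⟩
    · rintro ⟨a', ha'⟩
      obtain ⟨p', rfl⟩ := hπA a'
      show g' (V.mkQ (p, q)) = 0
      rw [← ha', hf'_apply]
      simp [g']

/-- The step of the horseshoe lemma towards kernels. -/
theorem exists_shortExact_ker_coprod {f' : A' →ₗ[R] E'} {g' : E' →ₗ[R] B'} (hf' : Injective f')
    (hfg' : Exact f' g') (hιA : Injective ιA) (hA : Exact ιA πA) (hπA : Surjective πA)
    (hιB : Injective ιB) (hB : Exact ιB πB) (hπB : Surjective πB)
    {μ : Q →ₗ[R] E'} (hμ : g' ∘ₗ μ = πB) :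
    Surjective ((f' ∘ₗ πA).coprod μ) ∧
      ∃ (f : A →ₗ[R] ker ((f' ∘ₗ πA).coprod μ)) (g : ker ((f' ∘ₗ πA).coprod μ) →ₗ[R] B),
        Injective f ∧ Surjective g ∧ Exact f g := by
  set K := ker ((f' ∘ₗ πA).coprod μ)
  have hμ_apply (q : Q) : g' (μ q) = πB q := LinearMap.congr_fun hμ q
  have hK (q : Q) (hq : πB q = 0) : ∃ p, (-p, q) ∈ K := by
    obtain ⟨a', ha'⟩ := (hfg' (μ q)).mp (by rw [hμ_apply, hq])
    obtain ⟨p, rfl⟩ := hπA a'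
    exact ⟨p, by simp [K, ha']⟩
  have hsnd (z : K) : (z : P × Q).2 ∈ range ιB := by
    obtain ⟨⟨p, q⟩, hz⟩ := z
    have := congrArg g' hz
    simp only [coprod_apply, LinearMap.comp_apply, map_add, hfg'.apply_apply_eq_zero,
      hμ_apply, zero_add, map_zero] at this
    exact (hB q).mp this
  have hf_mem (a : A) : (ιA a, (0 : Q)) ∈ K := by simp [K, hA.apply_apply_eq_zero]
  obtain ⟨g, hg⟩ := exists_comp_eq_of_injective hιB (f := snd R P Q ∘ₗ K.subtype) <| by
    rintro _ ⟨z, rfl⟩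
    exact hsnd z
  have hg_apply (z : K) : ιB (g z) = (z : P × Q).2 := LinearMap.congr_fun hg z
  refine ⟨fun e => ?_, (LinearMap.inl R P Q ∘ₗ ιA).codRestrict K hf_mem, g, ?_, ?_, ?_⟩
  · obtain ⟨q, hq⟩ := hπB (g' e)
    obtain ⟨a', ha'⟩ := (hfg' (e - μ q)).mp (by rw [map_sub, hμ_apply, hq, sub_self])
    obtain ⟨p, rfl⟩ := hπA a'
    exact ⟨(p, q), by simp [ha']⟩
  · intro a₁ a₂ h
    exact hιA (congrArg (fun z : K => (z : P × Q).1) h)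
  · intro b
    obtain ⟨p, hp⟩ := hK (ιB b) (hB.apply_apply_eq_zero b)
    exact ⟨⟨_, hp⟩, hιB (hg_apply _)⟩
  · rintro ⟨⟨p, q⟩, hz⟩
    rw [← map_eq_zero_iff ιB hιB, hg_apply]
    constructor
    · rintro (rfl : q = 0)
      have hp : πA p = 0 := hf' (by simpa [K] using hz)
      obtain ⟨a, rfl⟩ := (hA p).mp hp
      exact ⟨a, rfl⟩
    · rintro ⟨a, ha⟩
      exact (congrArg (fun z : K => (z : P × Q).2) ha).symm

end Horseshoe

theorem Int.exists_chain {F : ℤ → Type*} (L : ∀ i, F i → F (i + 1) → Prop) (x₀ : F 0)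
    (succ : ∀ i x, ∃ y, L i x y) (pred : ∀ i y, ∃ x, L i x y) :
    ∃ T : ∀ i, F i, T 0 = x₀ ∧ ∀ i, L i (T i) (T (i + 1)) := by
  choose up hup using succ
  choose down hdown using pred
  let nonneg (n : ℕ) : F n := Nat.rec (motive := fun n => F n) x₀ (fun n x => up n x) n
  let neg (n : ℕ) : F (Int.negSucc n) := Nat.rec (motive := fun n => F (Int.negSucc n))
    (down (Int.negSucc 0) x₀) (fun n x => down (Int.negSucc (n + 1)) x) n
  refine ⟨fun i => Int.rec nonneg neg i, rfl, ?_⟩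
  rintro (n | _ | n)
  · exact hup n (nonneg n)
  · exact hdown (Int.negSucc 0) x₀
  · exact hdown (Int.negSucc (n + 1)) (neg n)

structure ModuleCat.Extension {R : Type u} [Ring R] (A B : ModuleCat.{u} R) : Type (u + 1) where
  E : ModuleCat.{u} R
  f : A →ₗ[R] E
  g : E →ₗ[R] B
  injective_f : Injective f
  surjective_g : Surjective g
  exact : Exact f g

namespace ModuleCat.Extension

variable {R : Type u} [Ring R] {a b : SyzygyChain R} {i : ℤ}

def IsSyzygy (x : Extension (a.Z i) (b.Z i)) (y : Extension (a.Z (i + 1)) (b.Z (i + 1))) : Prop :=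
  ∃ (v : x.E →ₗ[R] a.P i × b.P i) (π : a.P i × b.P i →ₗ[R] y.E),
    Injective v ∧ Surjective π ∧ Exact v π

theorem exists_isSyzygy_succ (x : Extension (a.Z i) (b.Z i)) :
    ∃ y : Extension (a.Z (i + 1)) (b.Z (i + 1)), IsSyzygy x y := by
  obtain ⟨α, hα⟩ := b.homExtends i (a.projective i) x.f x.g x.injective_f x.surjective_g x.exact
    (a.ι i)
  obtain ⟨hv, f', g', hf', hg', hfg'⟩ := exists_shortExact_quotient_prod x.surjective_g x.exact
    (a.injective_ι i) (a.exact i) (a.surjective_π i)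
    (b.injective_ι i) (b.exact i) (b.surjective_π i) hα
  exact ⟨⟨ModuleCat.of R _, f', g', hf', hg', hfg'⟩, _, _, hv,
    Submodule.mkQ_surjective _, LinearMap.exact_map_mkQ_range _⟩

theorem exists_isSyzygy_pred (y : Extension (a.Z (i + 1)) (b.Z (i + 1))) :
    ∃ x : Extension (a.Z i) (b.Z i), IsSyzygy x y := by
  have := b.projective i
  obtain ⟨μ, hμ⟩ := Module.projective_lifting_property y.g (b.π i) y.surjective_g
  obtain ⟨hπ, f, g, hf, hg, hfg⟩ := exists_shortExact_ker_coprod y.injective_f y.exact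
    (a.injective_ι i) (a.exact i) (a.surjective_π i)
    (b.injective_ι i) (b.exact i) (b.surjective_π i) hμ
  exact ⟨⟨ModuleCat.of R _, f, g, hf, hg, hfg⟩, _, _, Submodule.injective_subtype _, hπ,
    LinearMap.exact_subtype_ker_map _⟩

end ModuleCat.Extension

theorem IsGorensteinProjective.of_exact {R : Type u} [Ring R] {A E B : ModuleCat.{u} R}
    {f : A →ₗ[R] E} {g : E →ₗ[R] B} (hf : Injective f) (hg : Surjective g) (hfg : Exact f g)
    (hA : IsGorensteinProjective R A) (hB : IsGorensteinProjective R B) :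
    IsGorensteinProjective R E := by
  obtain ⟨a, ⟨eA⟩⟩ := hA.exists_syzygyChain
  obtain ⟨b, ⟨eB⟩⟩ := hB.exists_syzygyChain
  let x₀ : ModuleCat.Extension (a.Z 0) (b.Z 0) :=
    ⟨E, f ∘ₗ eA.symm, eB ∘ₗ g, hf.comp eA.symm.injective, eB.surjective.comp hg,
      LinearEquiv.postcomp_exact_iff_exact.mpr (LinearEquiv.precomp_exact_iff_exact.mpr hfg)⟩
  obtain ⟨T, hT₀, hT⟩ := Int.exists_chain (F := fun i => ModuleCat.Extension (a.Z i) (b.Z i))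
    (fun i => ModuleCat.Extension.IsSyzygy (a := a) (b := b))
    x₀ (fun _ => ModuleCat.Extension.exists_isSyzygy_succ)
    (fun _ => ModuleCat.Extension.exists_isSyzygy_pred)
  choose v π hv hπ hvπ using hT
  have hext (i : ℤ) (Q : ModuleCat.{u} R) (hQ : Module.Projective R Q)
      (φ : (T i).E →ₗ[R] Q) : ∃ ψ : a.P i × b.P i →ₗ[R] Q, ψ ∘ₗ v i = φ :=
    HomExtends.of_exact (T (i + 1)).injective_f (T (i + 1)).surjective_g (T (i + 1)).exact
      (a.homExtends (i + 1) hQ) (b.homExtends (i + 1) hQ) (N := ModuleCat.of R _)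
      (v i) (π i) (hv i) (hπ i) (hvπ i) φ
  let c : SyzygyChain R :=
    ⟨fun i => (T i).E, fun i => ModuleCat.of R (a.P i × b.P i), v, π,
      fun i => have := a.projective i; have := b.projective i; inferInstance,
      hv, hπ, hvπ, hext⟩
  exact (congrArg (fun x => IsGorensteinProjective R x.E) hT₀).mp c.isGorensteinProjective

section Dimension

variable {R : Type u} [Ring R]

theorem pdLE.of_linearEquiv : ∀ {n : ℕ} {M N : ModuleCat.{u} R}, (M ≃ₗ[R] N) → pdLE R n M →
    pdLE R n N
  | 0, _, _, e, h => haveI : Module.Projective R _ := h; .of_equiv e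
  | _ + 1, _, _, e, ⟨P, p, hP, hp, hK⟩ =>
    ⟨P, e.toLinearMap ∘ₗ p, hP, e.surjective.comp hp, by rwa [LinearEquiv.ker_comp]⟩

theorem pdLE.succ_of_exact {n : ℕ} {K P W : ModuleCat.{u} R} [Module.Projective R P]
    {k : K →ₗ[R] P} {w : P →ₗ[R] W} (hk : Injective k) (hw : Surjective w) (hkw : Exact k w)
    (hK : pdLE R n K) : pdLE R (n + 1) W :=
  ⟨P, w, inferInstance, hw, hK.of_linearEquiv <|
    (LinearEquiv.ofInjective k hk).trans (LinearEquiv.ofEq _ _ hkw.linearMap_ker_eq.symm)⟩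

/-- `W` is the pushout of `0 → G → P → C → 0` along `G ↠ M`, for an embedding of `G` into a
projective `P` with Gorenstein projective cokernel `C`. -/
theorem exists_embedding_of_approximation {n : ℕ} {K G M : ModuleCat.{u} R} {i : K →ₗ[R] G}
    {p : G →ₗ[R] M} (hi : Injective i) (hp : Surjective p) (hip : Exact i p)
    (hG : IsGorensteinProjective R G) (hK : pdLE R n K) :
    ∃ (W C : ModuleCat.{u} R) (u : M →ₗ[R] W) (v : W →ₗ[R] C), Injective u ∧ Surjective v ∧
      Exact u v ∧ pdLE R (n + 1) W ∧ IsGorensteinProjective R C := by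
  obtain ⟨P, C, j, v, hP, hj, hv, hjv, hC⟩ := hG.exists_exact_projective
  have hvj : v ∘ₗ j = 0 ∘ₗ p := by rw [hjv.linearMap_comp_eq_zero, zero_comp]
  refine ⟨ModuleCat.of R (Pushout j p), C, Pushout.inr j p, Pushout.desc v 0 hvj,
    Pushout.inr_injective hj, Pushout.desc_surjective_of_left hv 0 hvj,
    Pushout.exact_inr hjv hvj, ?_, hC⟩
  exact pdLE.succ_of_exact (W := ModuleCat.of R (Pushout j p)) (k := j ∘ₗ i) (hj.comp hi)
    (Pushout.inl_surjective hp) (Pushout.exact_comp_inl hip) hK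

/-- `E` is the pushout of `0 → K → G → M → 0` along `K ↪ W`. -/
theorem exists_approximation_of_embedding {K G M W C : ModuleCat.{u} R} {i : K →ₗ[R] G}
    {p : G →ₗ[R] M} (hi : Injective i) (hp : Surjective p) (hip : Exact i p)
    (hG : IsGorensteinProjective R G) {u : K →ₗ[R] W} {v : W →ₗ[R] C} (hu : Injective u)
    (hv : Surjective v) (huv : Exact u v) (hC : IsGorensteinProjective R C) :
    ∃ (E : ModuleCat.{u} R) (w : W →ₗ[R] E) (q : E →ₗ[R] M), Injective w ∧ Surjective q ∧
      Exact w q ∧ IsGorensteinProjective R E := by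
  have hpi : p ∘ₗ i = 0 ∘ₗ u := by rw [hip.linearMap_comp_eq_zero, zero_comp]
  have hvu : 0 ∘ₗ i = v ∘ₗ u := by rw [huv.linearMap_comp_eq_zero, zero_comp]
  refine ⟨ModuleCat.of R (Pushout i u), Pushout.inr i u, Pushout.desc p 0 hpi,
    Pushout.inr_injective hi, Pushout.desc_surjective_of_left hp 0 hpi,
    Pushout.exact_inr hip hpi, ?_⟩
  exact IsGorensteinProjective.of_exact (Pushout.inl_injective hu)
    (Pushout.desc_surjective_of_right 0 hv hvu) (Pushout.exact_inl huv hvu) hG hC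

theorem GpdLE.exists_embedding : ∀ {n : ℕ} {M : ModuleCat.{u} R}, GpdLE R n M →
    ∃ (W C : ModuleCat.{u} R) (u : M →ₗ[R] W) (v : W →ₗ[R] C), Injective u ∧ Surjective v ∧
      Exact u v ∧ pdLE R n W ∧ IsGorensteinProjective R C
  | 0, _, hM =>
    let ⟨P, C, j, v, hP, hj, hv, hjv, hC⟩ := IsGorensteinProjective.exists_exact_projective hM
    ⟨P, C, j, v, hj, hv, hjv, hP, hC⟩
  | _ + 1, _, ⟨_, p, hG, hp, hK⟩ => by
    obtain ⟨W, C, u, v, hu, hv, huv, hW, hC⟩ := exists_embedding hK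
    obtain ⟨E, w, q, hw, hq, hwq, hE⟩ := exists_approximation_of_embedding
      (ker p).injective_subtype hp (exact_subtype_ker_map p) hG hu hv huv hC
    exact exists_embedding_of_approximation hw hq hwq hE hW

theorem GpdLE.exists_approximation {n : ℕ} {M : ModuleCat.{u} R} (hM : GpdLE R (n + 1) M) :
    ∃ (K G : ModuleCat.{u} R) (i : K →ₗ[R] G) (p : G →ₗ[R] M), Injective i ∧ Surjective p ∧
      Exact i p ∧ IsGorensteinProjective R G ∧ pdLE R n K := by
  obtain ⟨_, p, hG, hp, hK⟩ := hM
  obtain ⟨W, C, u, v, hu, hv, huv, hW, hC⟩ := hK.exists_embedding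
  obtain ⟨E, w, q, hw, hq, hwq, hE⟩ := exists_approximation_of_embedding
    (ker p).injective_subtype hp (exact_subtype_ker_map p) hG hu hv huv hC
  exact ⟨W, E, w, q, hw, hq, hwq, hE, hW⟩

end Dimension

/-- If `Gpd M ≤ n` (with `n ≥ 1`), there is a short exact sequence `0 → K → G → M → 0`
with `G` Gorenstein projective and `pd K ≤ n - 1`, which remains exact after applying
`Hom_R(-, X)` for every `X ∈ P_n^⊥`. -/
theorem gp_approximation_sequence (R : Type u) [Ring R] (n : ℕ) (hn : 1 ≤ n)
    (M : ModuleCat.{u} R) (hM : GpdLE R n M) :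
    ∃ (K G : ModuleCat.{u} R) (i : K →ₗ[R] G) (p : G →ₗ[R] M),
      Function.Injective i ∧ Function.Surjective p ∧ Function.Exact i p ∧
      IsGorensteinProjective R G ∧ pdLE R (n - 1) K ∧
      (∀ X : ModuleCat.{u} R,
        (∀ L : ModuleCat.{u} R, pdLE R n L → Ext1Vanishes R L X) →
        ∀ φ : K →ₗ[R] X, ∃ ψ : G →ₗ[R] X, ψ ∘ₗ i = φ) := by
  obtain ⟨m, rfl⟩ : ∃ m, n = m + 1 := ⟨n - 1, by omega⟩
  obtain ⟨K, G, i, p, hi, hp, hip, hG, hK⟩ := hM.exists_approximation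
  refine ⟨K, G, i, p, hi, hp, hip, hG, hK, fun X hX φ => ?_⟩
  obtain ⟨P, -, j, -, hP, hj, -, -, -⟩ := hG.exists_exact_projective
  have hji : Injective (j ∘ₗ i) := hj.comp hi
  let W := ModuleCat.of R (P ⧸ range (j ∘ₗ i))
  have hW : pdLE R (m + 1) W :=
    pdLE.succ_of_exact hji (Submodule.mkQ_surjective _) (LinearMap.exact_map_mkQ_range _) hK
  obtain ⟨ψ, hψ⟩ := (hX W hW).homExtends (j ∘ₗ i) (range (j ∘ₗ i)).mkQ hji
    (Submodule.mkQ_surjective _) (LinearMap.exact_map_mkQ_range _) φ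
  exact ⟨ψ ∘ₗ j, by rw [LinearMap.comp_assoc, hψ]⟩
end

section
/- Let R be a ring and M a module. If there is a short exact sequence 0 → M → L → N → 0 with L of projective dimension at most n and N Gorenstein projective, then M has Gorenstein projective dimension at most n. -/
universe u

open CategoryTheory

/-!
Case `pd L = 0`. Write `N = ker d⁰` for a totally acyclic complex `P`, lift `L → N` to
`σ : L → P⁻¹`, and let `K = ker ((d⁻², σ) : P⁻² × L → P⁻¹)`. This map is onto, so `K` is a
direct summand of `P⁻² × L`, hence projective, and
`⋯ → P⁻⁴ → P⁻³ → K → L → P⁰ → P¹ → ⋯` is again totally acyclic, with `M = ker (L → P⁰)`.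

Case `pd L ≤ n + 1`. Choose `0 → K' → Q → L → 0` with `Q` projective and `pd K' ≤ n`. Then
`G = ker (Q → N)` is Gorenstein projective by the first case, and `0 → K' → G → M → 0` is exact.
-/

open LinearMap Function

section Linear
variable {R : Type*} [Ring R] {L M N P : Type*} [AddCommGroup L] [AddCommGroup M]
  [AddCommGroup N] [AddCommGroup P] [Module R L] [Module R M] [Module R N] [Module R P]

theorem LinearMap.exists_comp_eq_of_ker_le {f : M →ₗ[R] N} (hf : Surjective f)
    {g : M →ₗ[R] P} (h : ker f ≤ ker g) : ∃ k : N →ₗ[R] P, k ∘ₗ f = g :=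
  ⟨(ker f).liftQ g h ∘ₗ (f.quotKerEquivOfSurjective hf).symm.toLinearMap, by
    ext x
    simp⟩

theorem Module.Projective.exists_comp_eq_of_range_le [Module.Projective R L]
    {f : M →ₗ[R] N} {g : L →ₗ[R] N} (h : range g ≤ range f) : ∃ k : L →ₗ[R] M, f ∘ₗ k = g := by
  obtain ⟨k, hk⟩ := Module.projective_lifting_property f.rangeRestrict
    (g.codRestrict (range f) fun x => h ⟨x, rfl⟩) f.surjective_rangeRestrict
  exact ⟨k, by ext x; exact congrArg Subtype.val (LinearMap.congr_fun hk x)⟩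

end Linear

variable {R : Type u} [Ring R]

section HomProjExact
variable {A B B' C : Type*} [AddCommGroup A] [AddCommGroup B]
  [AddCommGroup B'] [AddCommGroup C] [Module R A] [Module R B] [Module R B'] [Module R C]

/-- `A → B → C` stays exact at `Hom_R(B, Q)` after applying `Hom_R(-, Q)`, for every
projective `Q`. -/
def HomProjExact (f : A →ₗ[R] B) (g : B →ₗ[R] C) : Prop :=
  ∀ Q : ModuleCat.{u} R, Module.Projective R Q →
    ∀ h : B →ₗ[R] Q, h ∘ₗ f = 0 → ∃ k : C →ₗ[R] Q, k ∘ₗ g = h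

theorem HomProjExact.of_range_le {f : A →ₗ[R] B} {f' : B' →ₗ[R] B} {g : B →ₗ[R] C}
    (hg : HomProjExact f g) (hff' : range f ≤ range f') : HomProjExact f' g := by
  intro Q hQ h hh
  refine hg Q hQ h (ext fun x => ?_)
  obtain ⟨y, hy⟩ := hff' ⟨x, rfl⟩
  simpa [← hy] using LinearMap.congr_fun hh y

theorem HomProjExact.of_comp {f : A →ₗ[R] B} {g : B →ₗ[R] C} {ψ : C →ₗ[R] B'}
    (hg : HomProjExact f (ψ ∘ₗ g)) : HomProjExact f g := by
  intro Q hQ h hh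
  obtain ⟨k, hk⟩ := hg Q hQ h hh
  exact ⟨k ∘ₗ ψ, hk⟩

end HomProjExact

structure IsTotallyAcyclic (P : ℤ → ModuleCat.{u} R) (d : ∀ i, P i →ₗ[R] P (i + 1)) : Prop where
  projective : ∀ i, Module.Projective R (P i)
  exact : ∀ i, Exact (d i) (d (i + 1))
  homProjExact : ∀ i, HomProjExact (d i) (d (i + 1))

theorem isGorensteinProjective_iff {M : ModuleCat.{u} R} :
    IsGorensteinProjective R M ↔
      ∃ (P : ℤ → ModuleCat.{u} R) (d : ∀ i, P i →ₗ[R] P (i + 1)),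
        IsTotallyAcyclic P d ∧ Nonempty (M ≃ₗ[R] ker (d 0)) :=
  exists₂_congr fun _ _ => ⟨fun ⟨hP, hd, hl, e⟩ => ⟨⟨hP, hd, fun i Q hQ => hl Q hQ i⟩, e⟩,
    fun ⟨⟨hP, hd, hl⟩, e⟩ => ⟨hP, hd, fun Q hQ i => hl i Q hQ, e⟩⟩

theorem IsGorensteinProjective.of_linearEquiv {M M' : ModuleCat.{u} R} (e : M ≃ₗ[R] M')
    (hM : IsGorensteinProjective R M) : IsGorensteinProjective R M' :=
  let ⟨P, d, hP, hd, hl, ⟨e'⟩⟩ := hM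
  ⟨P, d, hP, hd, hl, ⟨e.symm ≪≫ₗ e'⟩⟩

section KerCoprod
variable {X₄ X₃ X₂ X₁ X₀ L : Type*} [AddCommGroup X₄] [AddCommGroup X₃]
  [AddCommGroup X₂] [AddCommGroup X₁] [AddCommGroup X₀] [AddCommGroup L] [Module R X₄]
  [Module R X₃] [Module R X₂] [Module R X₁] [Module R X₀] [Module R L]
  {δ₄ : X₄ →ₗ[R] X₃} {δ₃ : X₃ →ₗ[R] X₂} {δ₂ : X₂ →ₗ[R] X₁} {δ₁ : X₁ →ₗ[R] X₀}
  {π : L →ₗ[R] X₀} {σ : L →ₗ[R] X₁}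

theorem surjective_coprod_of_exact (h₂₁ : Exact δ₂ δ₁) (hσ : δ₁ ∘ₗ σ = π)
    (hπ : range δ₁ ≤ range π) : Surjective (δ₂.coprod σ) := by
  intro y
  obtain ⟨l, hl⟩ := hπ ⟨y, rfl⟩
  obtain ⟨x, hx⟩ := (h₂₁ (y - σ l)).1 (by simp [← hl, ← hσ])
  exact ⟨(x, l), by simp [hx]⟩

theorem exists_retraction_subtype_ker_coprod [Module.Projective R X₁]
    (hsurj : Surjective (δ₂.coprod σ)) :
    ∃ r : (X₂ × L) →ₗ[R] ker (δ₂.coprod σ), r ∘ₗ (ker (δ₂.coprod σ)).subtype = .id :=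
  ((exact_subtype_ker_map _).split_tfae (Submodule.injective_subtype _) hsurj |>.out 0 1).1
    (Module.projective_lifting_property _ _ hsurj)

theorem exact_snd_comp_subtype_ker_coprod (h₂₁ : Exact δ₂ δ₁) (hσ : δ₁ ∘ₗ σ = π) :
    Exact (snd R X₂ L ∘ₗ (ker (δ₂.coprod σ)).subtype) π := by
  refine exact_of_comp_of_mem_range (ext fun ⟨⟨x, l⟩, hxl⟩ => ?_) fun l hl => ?_
  · have : δ₂ x + σ l = 0 := hxl
    simp [← hσ, eq_neg_of_add_eq_zero_right this, h₂₁.apply_apply_eq_zero]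
  · obtain ⟨x, hx⟩ := (h₂₁ (σ l)).1 (by simpa [← hσ] using hl)
    exact ⟨⟨(-x, l), by simp [hx]⟩, rfl⟩

theorem homProjExact_snd_comp_subtype_ker_coprod (h₂₁ : HomProjExact δ₂ δ₁) (hσ : δ₁ ∘ₗ σ = π)
    (hsurj : Surjective (δ₂.coprod σ)) :
    HomProjExact (snd R X₂ L ∘ₗ (ker (δ₂.coprod σ)).subtype) π := by
  intro Q hQ f hf
  obtain ⟨h, hh⟩ := exists_comp_eq_of_ker_le hsurj (g := f ∘ₗ snd R X₂ L)
    fun v hv => by simpa using LinearMap.congr_fun hf ⟨v, hv⟩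
  obtain ⟨k, hk⟩ := h₂₁ Q hQ h (ext fun x => by simpa using LinearMap.congr_fun hh (x, 0))
  exact ⟨k, ext fun l => by simpa [← hσ, ← hk] using LinearMap.congr_fun hh (0, l)⟩

variable (δ₃ σ) in
def kerCoprodInl (h : δ₂ ∘ₗ δ₃ = 0) : X₃ →ₗ[R] ker (δ₂.coprod σ) :=
  codRestrict _ (inl R X₂ L ∘ₗ δ₃) fun x => by simpa using LinearMap.congr_fun h x

theorem exact_kerCoprodInl_snd (h₃₂ : Exact δ₃ δ₂) :
    Exact (kerCoprodInl δ₃ σ h₃₂.linearMap_comp_eq_zero)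
      (snd R X₂ L ∘ₗ (ker (δ₂.coprod σ)).subtype) := by
  rintro ⟨⟨x, l⟩, hxl⟩
  simp only [coe_comp, comp_apply, Submodule.coe_subtype, snd_apply]
  constructor
  · rintro rfl
    obtain ⟨y, rfl⟩ := (h₃₂ x).1 (by simpa using hxl)
    exact ⟨y, rfl⟩
  · rintro ⟨y, hy⟩
    exact congrArg (fun v => (Subtype.val v).2) hy.symm

theorem homProjExact_kerCoprodInl_snd (h₃₂ : HomProjExact δ₃ δ₂) (hδ : δ₂ ∘ₗ δ₃ = 0)
    {r : (X₂ × L) →ₗ[R] ker (δ₂.coprod σ)} (hr : r ∘ₗ (ker (δ₂.coprod σ)).subtype = .id) :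
    HomProjExact (kerCoprodInl δ₃ σ hδ) (snd R X₂ L ∘ₗ (ker (δ₂.coprod σ)).subtype) := by
  intro Q hQ f hf
  have hr' : ∀ v : ker (δ₂.coprod σ), r v = v := LinearMap.congr_fun hr
  obtain ⟨g, hg⟩ := h₃₂ Q hQ (f ∘ₗ r ∘ₗ inl R X₂ L) (ext fun x => by
    change f (r (kerCoprodInl δ₃ σ hδ x)) = 0
    rw [hr']
    exact LinearMap.congr_fun hf x)
  refine ⟨f ∘ₗ r ∘ₗ inr R X₂ L - g ∘ₗ σ, ext fun ⟨⟨x, l⟩, hxl⟩ => ?_⟩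
  have hσl : σ l = -δ₂ x := eq_neg_of_add_eq_zero_right hxl
  have hgx : g (δ₂ x) = f (r (x, 0)) := LinearMap.congr_fun hg x
  calc (f ∘ₗ r ∘ₗ inr R X₂ L - g ∘ₗ σ) l = f (r (0, l)) + f (r (x, 0)) := by simp [hσl, hgx]
    _ = f (r (x, l)) := by rw [← map_add, ← map_add, Prod.mk_add_mk, zero_add, add_zero]
    _ = f ⟨(x, l), hxl⟩ := congrArg f (hr' ⟨(x, l), hxl⟩)

theorem exact_kerCoprodInl_of_exact (h₄₃ : Exact δ₄ δ₃) (hδ : δ₂ ∘ₗ δ₃ = 0) :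
    Exact δ₄ (kerCoprodInl δ₃ σ hδ) := fun x => by
  simp [← h₄₃ x, kerCoprodInl, Subtype.ext_iff]

theorem homProjExact_kerCoprodInl_of_homProjExact (h₄₃ : HomProjExact δ₄ δ₃)
    (hδ : δ₂ ∘ₗ δ₃ = 0) : HomProjExact δ₄ (kerCoprodInl δ₃ σ hδ) :=
  HomProjExact.of_comp (ψ := fst R X₂ L ∘ₗ (ker (δ₂.coprod σ)).subtype) h₄₃

end KerCoprod

section Splice
variable {P : ℤ → ModuleCat.{u} R} {d : ∀ i, P i →ₗ[R] P (i + 1)} {L : ModuleCat.{u} R}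
  {π : L →ₗ[R] P 0} {σ : L →ₗ[R] P (-1)}

variable (d σ) in
def splicedKer : Submodule R (P (-2) × L) := ker ((d (-2)).coprod σ)

-- `⋯ → P⁻⁴ → P⁻³ → splicedKer d σ → L → P⁰ → P¹ → ⋯`, with `L` in degree `0`
variable (P d L σ) in
def splicedModule : ℤ → ModuleCat.{u} R
  | .ofNat 0 => L
  | .ofNat (k + 1) => P k
  | .negSucc 0 => ModuleCat.of R (splicedKer d σ)
  | .negSucc (k + 1) => P (.negSucc (k + 2))

variable (π σ) in
def splicedMap (hP : IsTotallyAcyclic P d) :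
    ∀ j, splicedModule P d L σ j →ₗ[R] splicedModule P d L σ (j + 1)
  | .ofNat 0 => π
  | .ofNat (k + 1) => d k
  | .negSucc 0 => snd R (P (-2)) L ∘ₗ (splicedKer d σ).subtype
  | .negSucc 1 => kerCoprodInl (d (-3)) σ (hP.exact (-3)).linearMap_comp_eq_zero
  | .negSucc (k + 2) => d (.negSucc (k + 3))

theorem IsTotallyAcyclic.range_eq_of_exact (hP : IsTotallyAcyclic P d) (hπ : Exact π (d 0)) :
    range π = range (d (-1)) := by
  rw [← hπ.linearMap_ker_eq, ← (hP.exact (-1)).linearMap_ker_eq]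
  rfl

theorem exists_retraction_subtype_splicedKer (hP : IsTotallyAcyclic P d) (hπ : Exact π (d 0))
    (hσ : d (-1) ∘ₗ σ = π) :
    ∃ r : (P (-2) × L : Type u) →ₗ[R] splicedKer d σ, r ∘ₗ (splicedKer d σ).subtype = .id :=
  -- instance search does not see `P (-1)` in the codomain `P (-2 + 1)` of `d (-2)`
  have : Module.Projective R (P (-2 + 1)) := hP.projective _
  exists_retraction_subtype_ker_coprod
    (surjective_coprod_of_exact (hP.exact (-2)) hσ (hP.range_eq_of_exact hπ).ge)

theorem splicedModule_projective [Module.Projective R L] (hP : IsTotallyAcyclic P d)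
    (hπ : Exact π (d 0)) (hσ : d (-1) ∘ₗ σ = π) :
    ∀ j, Module.Projective R (splicedModule P d L σ j)
  | .ofNat 0 => inferInstanceAs (Module.Projective R L)
  | .ofNat (k + 1) => hP.projective k
  | .negSucc 0 => by
    have := hP.projective (-2)
    obtain ⟨r, hr⟩ := exists_retraction_subtype_splicedKer hP hπ hσ
    exact .of_split _ r hr
  | .negSucc (k + 1) => hP.projective _

theorem splicedMap_exact (hP : IsTotallyAcyclic P d) (hπ : Exact π (d 0))
    (hσ : d (-1) ∘ₗ σ = π) :
    ∀ j, Exact (splicedMap π σ hP j) (splicedMap π σ hP (j + 1))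
  | .ofNat 0 => hπ
  | .ofNat (k + 1) => hP.exact k
  | .negSucc 0 => exact_snd_comp_subtype_ker_coprod (hP.exact (-2)) hσ
  | .negSucc 1 => exact_kerCoprodInl_snd (hP.exact (-3))
  | .negSucc 2 => exact_kerCoprodInl_of_exact (σ := σ) (hP.exact (-4))
      (hP.exact (-3)).linearMap_comp_eq_zero
  | .negSucc (_ + 3) => hP.exact _

theorem splicedMap_homProjExact (hP : IsTotallyAcyclic P d) (hπ : Exact π (d 0))
    (hσ : d (-1) ∘ₗ σ = π) :
    ∀ j, HomProjExact (splicedMap π σ hP j) (splicedMap π σ hP (j + 1))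
  | .ofNat 0 => (hP.homProjExact (-1)).of_range_le (hP.range_eq_of_exact hπ).ge
  | .ofNat (k + 1) => hP.homProjExact k
  | .negSucc 0 => homProjExact_snd_comp_subtype_ker_coprod (hP.homProjExact (-2)) hσ
      (surjective_coprod_of_exact (hP.exact (-2)) hσ (hP.range_eq_of_exact hπ).ge)
  | .negSucc 1 =>
    let ⟨_, hr⟩ := exists_retraction_subtype_splicedKer hP hπ hσ
    homProjExact_kerCoprodInl_snd (hP.homProjExact (-3))
      (hP.exact (-3)).linearMap_comp_eq_zero hr
  | .negSucc 2 => homProjExact_kerCoprodInl_of_homProjExact (σ := σ) (hP.homProjExact (-4))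
      (hP.exact (-3)).linearMap_comp_eq_zero
  | .negSucc (_ + 3) => hP.homProjExact _

theorem IsTotallyAcyclic.isGorensteinProjective_ker [Module.Projective R L]
    (hP : IsTotallyAcyclic P d) (hπ : Exact π (d 0)) :
    IsGorensteinProjective R (ModuleCat.of R (ker π)) := by
  obtain ⟨σ, hσ⟩ := Module.Projective.exists_comp_eq_of_range_le (hP.range_eq_of_exact hπ).le
  exact isGorensteinProjective_iff.2 ⟨_, splicedMap π σ hP,
    ⟨splicedModule_projective hP hπ hσ, splicedMap_exact hP hπ hσ,
      splicedMap_homProjExact hP hπ hσ⟩, ⟨LinearEquiv.refl R _⟩⟩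

end Splice

theorem isTotallyAcyclic_punit :
    IsTotallyAcyclic (fun _ => ModuleCat.of R PUnit.{u + 1}) fun _ => 0 where
  projective _ := inferInstanceAs (Module.Projective R PUnit.{u + 1})
  exact _ _ := ⟨fun _ => ⟨0, Subsingleton.elim _ _⟩, fun _ => Subsingleton.elim _ _⟩
  homProjExact _ _ _ _ _ := ⟨0, Subsingleton.elim _ _⟩

theorem isGorensteinProjective_of_projective (Q : ModuleCat.{u} R) [Module.Projective R Q] :
    IsGorensteinProjective R Q :=
  (isTotallyAcyclic_punit.isGorensteinProjective_ker (π := 0)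
    fun _ => ⟨fun _ => ⟨0, Subsingleton.elim _ _⟩, fun _ => Subsingleton.elim _ _⟩).of_linearEquiv
    (LinearEquiv.ofTop _ (ker_zero))

theorem isGorensteinProjective_of_exact {M L N : ModuleCat.{u} R} [Module.Projective R L]
    {i : M →ₗ[R] L} {p : L →ₗ[R] N} (hi : Injective i) (hp : Surjective p) (he : Exact i p)
    (hN : IsGorensteinProjective R N) : IsGorensteinProjective R M := by
  obtain ⟨P, d, hP, ⟨e⟩⟩ := isGorensteinProjective_iff.1 hN
  have hπ : Exact ((ker (d 0)).subtype ∘ₗ e.toLinearMap ∘ₗ p) (d 0) := by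
    rw [exact_iff, range_comp_of_range_eq_top (ker (d 0)).subtype
      (range_eq_top_of_surjective _ (e.surjective.comp hp :)), Submodule.range_subtype]
  have hker : range i = ker ((ker (d 0)).subtype ∘ₗ e.toLinearMap ∘ₗ p) := by
    rw [← he.linearMap_ker_eq, ker_comp_of_ker_eq_bot _ (Submodule.ker_subtype _),
      LinearEquiv.ker_comp]
  exact (hP.isGorensteinProjective_ker hπ).of_linearEquiv
    ((LinearEquiv.ofInjective i hi).trans (LinearEquiv.ofEq _ _ hker)).symm

theorem GpdLE.of_linearEquiv {n : ℕ} {M M' : ModuleCat.{u} R} (e : M ≃ₗ[R] M')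
    (hM : GpdLE R n M) : GpdLE R n M' := by
  cases n with
  | zero => exact IsGorensteinProjective.of_linearEquiv e hM
  | succ n =>
    obtain ⟨G, p, hG, hp, hK⟩ := hM
    refine ⟨G, e.toLinearMap ∘ₗ p, hG, e.surjective.comp hp, ?_⟩
    rwa [LinearEquiv.ker_comp]

theorem gpdLE_of_pdLE {n : ℕ} {M : ModuleCat.{u} R} (hM : pdLE R n M) : GpdLE R n M := by
  induction n generalizing M with
  | zero =>
    have : Module.Projective R M := hM
    exact isGorensteinProjective_of_projective M
  | succ n ih =>
    obtain ⟨P, p, hP, hp, hK⟩ := hM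
    have : Module.Projective R P := hP
    exact ⟨P, p, isGorensteinProjective_of_projective P, hp, ih hK⟩

section Pullback
variable {M L N P : Type*} [AddCommGroup M] [AddCommGroup L] [AddCommGroup N] [AddCommGroup P]
  [Module R M] [Module R L] [Module R N] [Module R P]

theorem exists_surjective_ker_linearEquiv {i : M →ₗ[R] L} {p : L →ₗ[R] N} (hi : Injective i)
    (he : Exact i p) {q : P →ₗ[R] L} (hq : Surjective q) :
    ∃ r : ker (p ∘ₗ q) →ₗ[R] M, Surjective r ∧ Nonempty (ker q ≃ₗ[R] ker r) := by
  have hmem : ∀ x, (q ∘ₗ (ker (p ∘ₗ q)).subtype) x ∈ range i := fun x => (he _).1 x.2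
  refine ⟨(LinearEquiv.ofInjective i hi).symm ∘ₗ codRestrict _ (q ∘ₗ (ker _).subtype) hmem,
    fun m => ?_, ⟨(Submodule.comapSubtypeEquivOfLe (ker_le_ker_comp q p)).symm ≪≫ₗ
      LinearEquiv.ofEq _ _ ?_⟩⟩
  · obtain ⟨x, hx⟩ := hq (i m)
    exact ⟨⟨x, by simp [hx, he.apply_apply_eq_zero]⟩,
      (LinearEquiv.ofInjective i hi).symm_apply_eq.2 (Subtype.ext hx)⟩
  · rw [LinearEquiv.ker_comp, ker_codRestrict]
    rfl

end Pullback

/-- If `0 → M → L → N → 0` is exact with `pd L ≤ n` and `N` Gorenstein projective,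
then `Gpd M ≤ n`. -/
theorem gpdLE_of_ses (R : Type u) [Ring R] (n : ℕ) (M L N : ModuleCat.{u} R)
    (i : M →ₗ[R] L) (p : L →ₗ[R] N)
    (hi : Function.Injective i) (hp : Function.Surjective p) (he : Function.Exact i p)
    (hL : pdLE R n L) (hN : IsGorensteinProjective R N) :
    GpdLE R n M := by
  cases n with
  | zero =>
    have : Module.Projective R L := hL
    exact isGorensteinProjective_of_exact hi hp he hN
  | succ n =>
    obtain ⟨P, q, hP, hq, hK⟩ := hL
    have : Module.Projective R P := hP
    obtain ⟨r, hr, ⟨e⟩⟩ := exists_surjective_ker_linearEquiv hi he hq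
    exact ⟨ModuleCat.of R (ker (p ∘ₗ q)), r,
      isGorensteinProjective_of_exact (Submodule.injective_subtype _) (hp.comp hq)
        (exact_subtype_ker_map _) hN, hr, (gpdLE_of_pdLE hK).of_linearEquiv e⟩
end
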